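/- arXiv:2501.19355 — 9 statements merged into one kernel-verified Lean document; each statement's English description precedes it below -/
import Mathlib

section
/- Let q : W × W → [0,∞) be an irreducible kernel on a finite set W admitting a positive reversible measure λ, i.e. λ_i q(i,j) = λ_j q(j,i) for all i,j. A family (ρ_i)_{i∈W} with values in [0,1] satisfies ρ_i(1-ρ_j)q(i,j) = ρ_j(1-ρ_i)q(j,i) for all i,j ∈ W if and only if either ρ_i = 1 for all i ∈ W, or there exists c ≥ 0 such that ρ_i = cλ_i/(1+cλ_i) for all i ∈ W. -/
/-!
Multiplying detailed balance across an edge `q a b ≠ 0` by `λ b` and using reversibility turns it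
into `ρ a (1 - ρ b) λ b = ρ b (1 - ρ a) λ a`: the odds `ρ i / ((1 - ρ i) λ i)` agree at both ends.
So if `ρ i₀ < 1` for one `i₀`, the relation `ρ i = c λ i (1 - ρ i)` with `c` the odds at `i₀`
spreads from `i₀` to all of `W` by irreducibility, and it solves to `ρ i = c λ i / (1 + c λ i)`.
Conversely, that relation makes both sides of detailed balance equal to
`c (1 - ρ i) (1 - ρ j) λ i q i j`.
-/

section Field

variable {W K : Type*} [Field K] {q : W → W → K} {lam ρ : W → K}

theorem cross_balance_of_detailed_balance (hrev : ∀ i j, lam i * q i j = lam j * q j i)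
    {a b : W} (hab : q a b ≠ 0)
    (hdb : ρ a * (1 - ρ b) * q a b = ρ b * (1 - ρ a) * q b a) :
    ρ a * (1 - ρ b) * lam b = ρ b * (1 - ρ a) * lam a := by
  refine mul_right_cancel₀ hab ?_
  linear_combination lam b * hdb - ρ b * (1 - ρ a) * hrev a b

theorem eq_mul_mul_one_sub_of_cross_balance {c : K} {a b : W} (ha_ne : lam a ≠ 0)
    (ha : ρ a = c * lam a * (1 - ρ a))
    (hcross : ρ a * (1 - ρ b) * lam b = ρ b * (1 - ρ a) * lam a) :
    ρ b = c * lam b * (1 - ρ b) := by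
  have h_one_sub : 1 - ρ a ≠ 0 := by
    intro h
    rw [h, mul_zero] at ha
    exact one_ne_zero ((sub_eq_zero.mp h).trans ha)
  refine mul_left_cancel₀ (mul_ne_zero h_one_sub ha_ne) ?_
  linear_combination -hcross + (1 - ρ b) * lam b * ha

theorem detailed_balance_of_eq_mul_mul_one_sub (hrev : ∀ i j, lam i * q i j = lam j * q j i)
    {c : K} (hρ : ∀ i, ρ i = c * lam i * (1 - ρ i)) (i j : W) :
    ρ i * (1 - ρ j) * q i j = ρ j * (1 - ρ i) * q j i := by
  linear_combination (1 - ρ j) * q i j * hρ i - (1 - ρ i) * q j i * hρ j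
    + c * (1 - ρ i) * (1 - ρ j) * hrev i j

theorem eq_div_one_add_iff_eq_mul_one_sub {x t : K} (ht : 1 + t ≠ 0) :
    x = t / (1 + t) ↔ x = t * (1 - x) := by
  rw [eq_div_iff ht]
  constructor <;> intro h <;> linear_combination h

end Field

theorem detailed_balance_characterization_general
    {W : Type*} (q : W → W → ℝ)
    (hirr : ∀ i j : W, Relation.ReflTransGen (fun a b => 0 < q a b) i j)
    (lam : W → ℝ) (hlam : ∀ i, 0 < lam i)
    (hrev : ∀ i j, lam i * q i j = lam j * q j i)
    (ρ : W → ℝ) (hρ : ∀ i, ρ i ∈ Set.Icc (0:ℝ) 1) :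
    (∀ i j, ρ i * (1 - ρ j) * q i j = ρ j * (1 - ρ i) * q j i) ↔
      ((∀ i, ρ i = 1) ∨
        ∃ c : ℝ, 0 ≤ c ∧ ∀ i, ρ i = c * lam i / (1 + c * lam i)) := by
  have h_one_add {c : ℝ} (hc : 0 ≤ c) (i : W) : 1 + c * lam i ≠ 0 := by
    have := hlam i; positivity
  constructor
  · intro hdb
    refine or_iff_not_imp_left.mpr fun h_all => ?_
    obtain ⟨i₀, hi₀⟩ := not_forall.mp h_all
    have h_lt : ρ i₀ < 1 := lt_of_le_of_ne (hρ i₀).2 hi₀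
    have h_den : 0 < (1 - ρ i₀) * lam i₀ := mul_pos (sub_pos.mpr h_lt) (hlam i₀)
    set c := ρ i₀ / ((1 - ρ i₀) * lam i₀)
    have hc : 0 ≤ c := div_nonneg (hρ i₀).1 h_den.le
    have h_base : ρ i₀ = c * lam i₀ * (1 - ρ i₀) := by
      rw [mul_assoc, mul_comm (lam i₀), div_mul_cancel₀ _ h_den.ne']
    refine ⟨c, hc, fun j => (eq_div_one_add_iff_eq_mul_one_sub (h_one_add hc j)).mpr ?_⟩
    induction hirr i₀ j with
    | refl => exact h_base
    | tail _ hab ih =>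
      exact eq_mul_mul_one_sub_of_cross_balance (hlam _).ne' ih
        (cross_balance_of_detailed_balance hrev hab.ne' (hdb _ _))
  · rintro (h_all | ⟨c, hc, hc_eq⟩)
    · intro i j
      rw [h_all i, h_all j, sub_self, mul_zero, zero_mul, zero_mul]
    · exact detailed_balance_of_eq_mul_mul_one_sub hrev fun i =>
        (eq_div_one_add_iff_eq_mul_one_sub (h_one_add hc i)).mp (hc_eq i)

theorem detailed_balance_characterization
    {W : Type*} [Fintype W] (q : W → W → ℝ) (hq : ∀ i j, 0 ≤ q i j)
    (hirr : ∀ i j : W, Relation.ReflTransGen (fun a b => 0 < q a b) i j)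
    (lam : W → ℝ) (hlam : ∀ i, 0 < lam i)
    (hrev : ∀ i j, lam i * q i j = lam j * q j i)
    (ρ : W → ℝ) (hρ : ∀ i, ρ i ∈ Set.Icc (0:ℝ) 1) :
    (∀ i j, ρ i * (1 - ρ j) * q i j = ρ j * (1 - ρ i) * q j i) ↔
      ((∀ i, ρ i = 1) ∨
        ∃ c : ℝ, 0 ≤ c ∧ ∀ i, ρ i = c * lam i / (1 + c * lam i)) :=
  detailed_balance_characterization_general q hirr lam hlam hrev ρ hρ
end

section
/- Let q : W × W → [0,∞) be an irreducible kernel on a finite set W of size n with positive reversible measure λ, and let F = {ρ ∈ [0,1]^W : ρ_i(1-ρ_j)q(i,j) = ρ_j(1-ρ_i)q(j,i) for all i,j}. Then the map ψ : F → [0,n], ψ(ρ) = Σ_{i∈W} ρ_i, is a bijection, and for each i ∈ W the function ρ ↦ (ψ^{-1}(ρ))_i is continuous and nondecreasing on [0,n]. -/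
/-!
Along an edge with `q i j ≠ 0`, reversibility turns detailed balance into
`ρ i * (1 - ρ j) * λ j = ρ j * (1 - ρ i) * λ i`, i.e. the plane vectors `(ρ i, (1 - ρ i) * λ i)`
and `(ρ j, (1 - ρ j) * λ j)` are proportional. These vectors are never zero and proportionality
of nonzero vectors is transitive, so irreducibility spreads the relation to all pairs. Hence the
equilibria are exactly the points `ρ i = t λ i / (1 - t + t λ i)`, `t ∈ [0, 1]`, of a curve whose
coordinates are continuous and strictly increasing in `t`. The total mass is then a continuous
strictly increasing bijection `[0, 1] → [0, n]`, and the inverse of such a map is monotone and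
continuous.
-/

open Set

theorem MonotoneOn.continuousOn_of_image_eq_Icc {α β : Type*} [LinearOrder α] [TopologicalSpace α]
    [OrderTopology α] [LinearOrder β] [TopologicalSpace β] [OrderTopology β] [DenselyOrdered β]
    {g : α → β} {c d : α} {a b : β} (hg : MonotoneOn g (Icc c d))
    (himage : g '' Icc c d = Icc a b) : ContinuousOn g (Icc c d) := by
  have hmaps : MapsTo g (Icc c d) (Icc a b) := himage ▸ mapsTo_image g _
  have hsurj : Function.Surjective hmaps.restrict := by
    rintro ⟨y, hy⟩
    obtain ⟨x, hx, rfl⟩ : y ∈ g '' Icc c d := himage ▸ hy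
    exact ⟨⟨x, hx⟩, rfl⟩
  have hrestrict : Monotone hmaps.restrict := fun x y hxy => hg x.2 y.2 hxy
  rw [continuousOn_iff_continuous_domRestrict]
  exact continuous_subtype_val.comp (hrestrict.continuous_of_surjective hsurj)

theorem StrictMonoOn.exists_monotoneOn_continuousOn_invOn_Icc {α β : Type*}
    [ConditionallyCompleteLinearOrder α] [TopologicalSpace α] [OrderTopology α] [DenselyOrdered α]
    [LinearOrder β] [TopologicalSpace β] [OrderTopology β]
    {f : α → β} {a b : α} (hab : a ≤ b) (hmono : StrictMonoOn f (Icc a b))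
    (hf : ContinuousOn f (Icc a b)) :
    ∃ g : β → α, (∀ y ∈ Icc (f a) (f b), g y ∈ Icc a b ∧ f (g y) = y) ∧
      MonotoneOn g (Icc (f a) (f b)) ∧ ContinuousOn g (Icc (f a) (f b)) := by
  have himage := hf.image_Icc_of_monotoneOn hab hmono.monotoneOn
  set g := Function.invFunOn f (Icc a b)
  have hinv : ∀ y ∈ Icc (f a) (f b), g y ∈ Icc a b ∧ f (g y) = y := by
    intro y hy
    rw [← himage] at hy
    exact ⟨Function.invFunOn_mem hy, Function.invFunOn_eq hy⟩
  have hgmono : MonotoneOn g (Icc (f a) (f b)) := fun y hy y' hy' hyy' => by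
    rwa [← hmono.le_iff_le (hinv y hy).1 (hinv y' hy').1, (hinv y hy).2, (hinv y' hy').2]
  refine ⟨g, hinv, hgmono, hgmono.continuousOn_of_image_eq_Icc (a := a) (b := b) ?_⟩
  rw [← himage, hmono.injOn.leftInvOn_invFunOn.image_image]

theorem mul_eq_mul_trans {R : Type*} [CommRing R] [IsDomain R] {a₁ a₂ b₁ b₂ c₁ c₂ : R}
    (hb : b₁ ≠ 0 ∨ b₂ ≠ 0) (hab : a₁ * b₂ = b₁ * a₂) (hbc : b₁ * c₂ = c₁ * b₂) :
    a₁ * c₂ = c₁ * a₂ := by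
  rcases hb with hb | hb
  · exact mul_left_cancel₀ hb (by linear_combination c₁ * hab + a₁ * hbc)
  · exact mul_left_cancel₀ hb (by linear_combination c₂ * hab + a₂ * hbc)

theorem one_sub_add_mul_pos {𝕜 : Type*} [Field 𝕜] [LinearOrder 𝕜] [IsStrictOrderedRing 𝕜]
    {t l : 𝕜} (ht : t ∈ Icc (0 : 𝕜) 1) (hl : 0 < l) : 0 < 1 - t + t * l := by
  rcases ht.2.lt_or_eq with h | rfl
  · nlinarith [mul_nonneg ht.1 hl.le]
  · linarith

namespace Equilibrium

variable {W : Type*}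

def IsDetailedBalanced (q : W → W → ℝ) (ρ : W → ℝ) : Prop :=
  ∀ i j, ρ i * (1 - ρ j) * q i j = ρ j * (1 - ρ i) * q j i

def IsEquilibrium (q : W → W → ℝ) (ρ : W → ℝ) : Prop :=
  (∀ i, ρ i ∈ Icc (0 : ℝ) 1) ∧ IsDetailedBalanced q ρ

/- For the kernel `(i, j) ↦ lam j`, detailed balance says that the odds `ρ i / (1 - ρ i)` are
proportional to `lam i`. -/
theorem IsDetailedBalanced.of_reversible {q : W → W → ℝ} {lam ρ : W → ℝ} (hlam : ∀ i, lam i ≠ 0)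
    (hrev : ∀ i j, lam i * q i j = lam j * q j i) (h : IsDetailedBalanced (fun _ j => lam j) ρ) :
    IsDetailedBalanced q ρ := fun i j =>
  mul_left_cancel₀ (hlam i) (by linear_combination ρ i * (1 - ρ j) * hrev i j + q j i * h i j)

theorem IsDetailedBalanced.reversible_of_reflTransGen {q : W → W → ℝ} {lam ρ : W → ℝ}
    (hirr : ∀ i j, Relation.ReflTransGen (fun a b => q a b ≠ 0) i j) (hlam : ∀ i, lam i ≠ 0)
    (hrev : ∀ i j, lam i * q i j = lam j * q j i) (h : IsDetailedBalanced q ρ) :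
    IsDetailedBalanced (fun _ j => lam j) ρ := by
  intro i j
  induction hirr i j with
  | refl => ring
  | @tail b c _ hbc ih =>
    have hedge : ρ b * (1 - ρ c) * lam c = ρ c * (1 - ρ b) * lam b :=
      mul_left_cancel₀ hbc (by linear_combination lam c * h b c - ρ c * (1 - ρ b) * hrev b c)
    have hb : ρ b ≠ 0 ∨ (1 - ρ b) * lam b ≠ 0 := by
      by_cases h0 : ρ b = 0
      · simp [h0, hlam b]
      · exact Or.inl h0
    have := mul_eq_mul_trans (a₁ := ρ i) (a₂ := (1 - ρ i) * lam i) (c₁ := ρ c)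
      (c₂ := (1 - ρ c) * lam c) hb (by linear_combination ih) (by linear_combination hedge)
    linear_combination this

/- The product-Bernoulli profile `c lam i / (1 + c lam i)` with fugacity `c = t / (1 - t)`;
the parameter `t ∈ [0, 1]` also reaches the endpoints `c = 0` and `c = ∞`. -/
noncomputable def equilibriumProfile (lam : W → ℝ) (t : ℝ) (i : W) : ℝ :=
  t * lam i / (1 - t + t * lam i)

variable {lam : W → ℝ}

theorem equilibriumProfile_mem_Icc (hlam : ∀ i, 0 < lam i) {t : ℝ} (ht : t ∈ Icc (0 : ℝ) 1)
    (i : W) : equilibriumProfile lam t i ∈ Icc (0 : ℝ) 1 := by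
  have hd := one_sub_add_mul_pos ht (hlam i)
  refine ⟨div_nonneg (mul_nonneg ht.1 (hlam i).le) hd.le, (div_le_one hd).2 ?_⟩
  linarith [ht.2]

theorem isDetailedBalanced_equilibriumProfile (hlam : ∀ i, 0 < lam i) {t : ℝ}
    (ht : t ∈ Icc (0 : ℝ) 1) :
    IsDetailedBalanced (fun _ j => lam j) (equilibriumProfile lam t) := by
  intro i j
  have hdi := (one_sub_add_mul_pos ht (hlam i)).ne'
  have hdj := (one_sub_add_mul_pos ht (hlam j)).ne'
  simp only [equilibriumProfile]
  field_simp
  ring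

theorem strictMonoOn_equilibriumProfile (hlam : ∀ i, 0 < lam i) (i : W) :
    StrictMonoOn (fun t => equilibriumProfile lam t i) (Icc 0 1) := by
  intro s hs t ht hst
  simp only [equilibriumProfile]
  rw [div_lt_div_iff₀ (one_sub_add_mul_pos hs (hlam i)) (one_sub_add_mul_pos ht (hlam i))]
  nlinarith [mul_lt_mul_of_pos_right hst (hlam i)]

theorem continuousOn_equilibriumProfile (hlam : ∀ i, 0 < lam i) (i : W) :
    ContinuousOn (fun t => equilibriumProfile lam t i) (Icc 0 1) :=
  ContinuousOn.div (by fun_prop) (by fun_prop) fun t ht => (one_sub_add_mul_pos ht (hlam i)).ne'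

theorem equilibriumProfile_zero : equilibriumProfile lam 0 = 0 := by
  ext i
  simp [equilibriumProfile]

theorem equilibriumProfile_one (hlam : ∀ i, lam i ≠ 0) : equilibriumProfile lam 1 = 1 := by
  ext i
  simp [equilibriumProfile, hlam i]

theorem exists_equilibriumProfile_eq [Nonempty W] (hlam : ∀ i, 0 < lam i) {ρ : W → ℝ}
    (hρ : ∀ i, ρ i ∈ Icc (0 : ℝ) 1) (h : IsDetailedBalanced (fun _ j => lam j) ρ) :
    ∃ t ∈ Icc (0 : ℝ) 1, equilibriumProfile lam t = ρ := by
  obtain ⟨i⟩ := ‹Nonempty W›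
  set D := ρ i + (1 - ρ i) * lam i
  have hD : 0 < D := by
    have := one_sub_add_mul_pos (t := 1 - ρ i) ⟨by linarith [(hρ i).2], by linarith [(hρ i).1]⟩
      (hlam i)
    linarith
  set t := ρ i / D
  have htD : t * D = ρ i := div_mul_cancel₀ _ hD.ne'
  have ht : t ∈ Icc (0 : ℝ) 1 :=
    ⟨div_nonneg (hρ i).1 hD.le, (div_le_one hD).2
      (le_add_of_nonneg_right (mul_nonneg (sub_nonneg.2 (hρ i).2) (hlam i).le))⟩
  refine ⟨t, ht, funext fun j => ?_⟩
  rw [equilibriumProfile, div_eq_iff (one_sub_add_mul_pos ht (hlam j)).ne']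
  exact mul_left_cancel₀ hD.ne' (by linear_combination (lam j + ρ j - ρ j * lam j) * htD + h i j)

theorem isEquilibrium_iff_exists_equilibriumProfile_eq [Nonempty W] {q : W → W → ℝ}
    (hirr : ∀ i j, Relation.ReflTransGen (fun a b => q a b ≠ 0) i j) (hlam : ∀ i, 0 < lam i)
    (hrev : ∀ i j, lam i * q i j = lam j * q j i) {ρ : W → ℝ} :
    IsEquilibrium q ρ ↔ ∃ t ∈ Icc (0 : ℝ) 1, equilibriumProfile lam t = ρ := by
  have hlam₀ : ∀ i, lam i ≠ 0 := fun i => (hlam i).ne'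
  constructor
  · rintro ⟨hρ, hbal⟩
    exact exists_equilibriumProfile_eq hlam hρ (hbal.reversible_of_reflTransGen hirr hlam₀ hrev)
  · rintro ⟨t, ht, rfl⟩
    exact ⟨equilibriumProfile_mem_Icc hlam ht,
      (isDetailedBalanced_equilibriumProfile hlam ht).of_reversible hlam₀ hrev⟩

variable [Fintype W]

theorem strictMonoOn_sum_equilibriumProfile [Nonempty W] (hlam : ∀ i, 0 < lam i) :
    StrictMonoOn (fun t => ∑ i, equilibriumProfile lam t i) (Icc 0 1) := fun _ hs _ ht hst =>
  Finset.sum_lt_sum_of_nonempty Finset.univ_nonempty fun i _ =>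
    strictMonoOn_equilibriumProfile hlam i hs ht hst

theorem continuousOn_sum_equilibriumProfile (hlam : ∀ i, 0 < lam i) :
    ContinuousOn (fun t => ∑ i, equilibriumProfile lam t i) (Icc 0 1) :=
  continuousOn_finsetSum _ fun i _ => continuousOn_equilibriumProfile hlam i

theorem sum_mem_Icc_card {ρ : W → ℝ} (hρ : ∀ i, ρ i ∈ Icc (0 : ℝ) 1) :
    ∑ i, ρ i ∈ Icc (0 : ℝ) (Fintype.card W) :=
  ⟨Finset.sum_nonneg fun i _ => (hρ i).1, by
    simpa using Finset.sum_le_sum fun i (_ : i ∈ Finset.univ) => (hρ i).2⟩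

end Equilibrium

open Equilibrium in
theorem equilibrium_manifold_parametrization_general
    {W : Type*} [Fintype W] (q : W → W → ℝ)
    (hirr : ∀ i j : W, Relation.ReflTransGen (fun a b => 0 < q a b) i j)
    (lam : W → ℝ) (hlam : ∀ i, 0 < lam i)
    (hrev : ∀ i j, lam i * q i j = lam j * q j i) :
    let n : ℕ := Fintype.card W
    let Feq : Set (W → ℝ) :=
      {ρ | (∀ i, ρ i ∈ Set.Icc (0:ℝ) 1) ∧
        ∀ i j, ρ i * (1 - ρ j) * q i j = ρ j * (1 - ρ i) * q j i}
    Set.BijOn (fun ρ : W → ℝ => ∑ i, ρ i) Feq (Set.Icc 0 (n : ℝ)) ∧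
    ∃ Φ : ℝ → W → ℝ,
      (∀ k ∈ Set.Icc (0:ℝ) (n : ℝ), Φ k ∈ Feq ∧ ∑ i, Φ k i = k) ∧
      ∀ i, ContinuousOn (fun k => Φ k i) (Set.Icc 0 (n : ℝ)) ∧
        MonotoneOn (fun k => Φ k i) (Set.Icc 0 (n : ℝ)) := by
  intro n Feq
  rcases isEmpty_or_nonempty W with hW | hW
  · refine ⟨⟨fun ρ _ => ?_, fun _ _ _ _ _ => Subsingleton.elim _ _, fun k hk => ?_⟩,
      fun _ => 0, fun k hk => ?_, isEmptyElim⟩ <;> simp_all [n, Feq]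
  have hFeq : ∀ ρ, ρ ∈ Feq ↔ ∃ t ∈ Icc (0 : ℝ) 1, equilibriumProfile lam t = ρ := fun ρ =>
    isEquilibrium_iff_exists_equilibriumProfile_eq
      (fun i j => Relation.ReflTransGen.mono (p := fun a b => q a b ≠ 0)
        (fun _ _ hab => hab.ne') _ _ (hirr i j)) hlam hrev
  obtain ⟨τ, hτ, hτmono, hτcont⟩ :=
    (strictMonoOn_sum_equilibriumProfile hlam).exists_monotoneOn_continuousOn_invOn_Icc
      zero_le_one (continuousOn_sum_equilibriumProfile hlam)
  have hS0 : ∑ i, equilibriumProfile lam 0 i = 0 := by simp [equilibriumProfile_zero]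
  have hS1 : ∑ i, equilibriumProfile lam 1 i = n := by
    simp [n, equilibriumProfile_one fun i => (hlam i).ne']
  rw [hS0, hS1] at hτ hτmono hτcont
  have hτmaps : MapsTo τ (Icc 0 n) (Icc 0 1) := fun k hk => (hτ k hk).1
  have hΦ : ∀ k ∈ Icc (0 : ℝ) n,
      equilibriumProfile lam (τ k) ∈ Feq ∧ ∑ i, equilibriumProfile lam (τ k) i = k :=
    fun k hk => ⟨(hFeq _).2 ⟨τ k, (hτ k hk).1, rfl⟩, (hτ k hk).2⟩
  refine ⟨⟨fun ρ hρ => sum_mem_Icc_card hρ.1, ?_, fun k hk => ⟨_, hΦ k hk⟩⟩,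
    fun k => equilibriumProfile lam (τ k), hΦ, fun i =>
      ⟨(continuousOn_equilibriumProfile hlam i).comp hτcont hτmaps,
        (strictMonoOn_equilibriumProfile hlam i).monotoneOn.comp hτmono hτmaps⟩⟩
  rintro _ hρ _ hσ hsum
  obtain ⟨t, ht, rfl⟩ := (hFeq _).1 hρ
  obtain ⟨s, hs, rfl⟩ := (hFeq _).1 hσ
  rw [(strictMonoOn_sum_equilibriumProfile hlam).injOn ht hs hsum]

theorem equilibrium_manifold_parametrization
    {W : Type*} [Fintype W] (q : W → W → ℝ) (hq : ∀ i j, 0 ≤ q i j)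
    (hirr : ∀ i j : W, Relation.ReflTransGen (fun a b => 0 < q a b) i j)
    (lam : W → ℝ) (hlam : ∀ i, 0 < lam i)
    (hrev : ∀ i j, lam i * q i j = lam j * q j i) :
    let n : ℕ := Fintype.card W
    let Feq : Set (W → ℝ) :=
      {ρ | (∀ i, ρ i ∈ Set.Icc (0:ℝ) 1) ∧
        ∀ i j, ρ i * (1 - ρ j) * q i j = ρ j * (1 - ρ i) * q j i}
    Set.BijOn (fun ρ : W → ℝ => ∑ i, ρ i) Feq (Set.Icc 0 (n : ℝ)) ∧
    ∃ Φ : ℝ → W → ℝ,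
      (∀ k ∈ Set.Icc (0:ℝ) (n : ℝ), Φ k ∈ Feq ∧ ∑ i, Φ k i = k) ∧
      ∀ i, ContinuousOn (fun k => Φ k i) (Set.Icc 0 (n : ℝ)) ∧
        MonotoneOn (fun k => Φ k i) (Set.Icc 0 (n : ℝ)) :=
  equilibrium_manifold_parametrization_general q hirr lam hlam hrev
end

section
/- Let π be a kernel on a finite set S that is weakly irreducible: for every x ≠ y in S, either there is a π-path from x to y or a π-path from y to x. Then the irreducibility classes of π can be labeled Γ_0, …, Γ_{m-1} in a unique way such that for every α ∈ {0,…,m-2} there exist i ∈ Γ_α and j ∈ Γ_{α+1} with π(i,j) > 0; moreover Γ_{m-1} is the unique recurrent class. -/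
/-- Reachability by a path of positive-rate jumps. -/
def kernelReach {S : Type*} (π : S → S → ℝ) : S → S → Prop :=
  Relation.ReflTransGen (fun a b => 0 < π a b)

/-- An irreducibility class of the kernel `π`. -/
def isIrredClass {S : Type*} (π : S → S → ℝ) (C : Set S) : Prop :=
  ∃ x, C = {y | kernelReach π x y ∧ kernelReach π y x}

/-!
Mutual reachability is an equivalence relation whose classes are the irreducibility classes, and
reachability descends to a partial order on them, which weak irreducibility makes linear. The
labeling is the unique order isomorphism of `Fin m` with this finite chain: a path from a class to
the next one must contain a jump between the two, and a class is closed exactly when it is maximal.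
Conversely, jumps between consecutive labels force any labeling to be strictly increasing, hence
to be that isomorphism.
-/

open Function Relation

theorem Relation.ReflTransGen.exists_rel_of_covBy {α β : Type*} [PartialOrder β]
    {r : α → α → Prop} {f : α → β} (hf : ∀ a b, r a b → f a ≤ f b) {x y : α}
    (hxy : ReflTransGen r x y) (hcov : f x ⋖ f y) :
    ∃ a b, r a b ∧ f a = f x ∧ f b = f y := by
  have hmono : ∀ {a b}, ReflTransGen r a b → f a ≤ f b := fun h => by
    induction h with
    | refl => exact le_rfl
    | tail _ hbc ih => exact ih.trans (hf _ _ hbc)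
  -- the last step leaving the level of `x` lands on the level of `y`: nothing lies in between
  induction hxy with
  | refl => exact (hcov.lt.ne rfl).elim
  | @tail b c hxb hbc ih =>
    by_cases hbx : f b ≤ f x
    · exact ⟨b, c, hbc, le_antisymm hbx (hmono hxb), rfl⟩
    · have hbc' : f b = f c :=
        eq_of_le_of_not_lt (hf _ _ hbc) (hcov.2 (lt_of_le_not_ge (hmono hxb) hbx))
      obtain ⟨a, d, had, ha, hd⟩ := ih (hbc' ▸ hcov)
      exact ⟨a, d, had, ha, hd.trans hbc'⟩

namespace Fin

variable {m : ℕ}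

theorem isMax_iff_val_eq_sub_one {a : Fin m} : IsMax a ↔ (a : ℕ) = m - 1 := by
  refine ⟨fun ha => ?_, fun ha b _ => Fin.le_def.2 (by omega)⟩
  by_contra hne
  have hlt : (a : ℕ) + 1 < m := by omega
  have : (a : ℕ) + 1 ≤ a := ha (show a ≤ ⟨a + 1, hlt⟩ from Fin.le_def.2 (Nat.le_succ a))
  omega

theorem covBy_mk_add_one (a : Fin m) (h : (a : ℕ) + 1 < m) : a ⋖ ⟨a + 1, h⟩ :=
  Fin.covBy_iff.2 (Nat.covBy_iff_add_one_eq.2 rfl)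

theorem strictMono_of_lt_mk_add_one {β : Type*} [Preorder β] {f : Fin m → β}
    (hf : ∀ (a : Fin m) (h : (a : ℕ) + 1 < m), f a < f ⟨a + 1, h⟩) : StrictMono f := by
  cases m with
  | zero => exact fun a => a.elim0
  | succ n => exact Fin.strictMono_iff_lt_succ.2 fun i => hf i.castSucc (by simp)

end Fin

section IrredClasses

variable {S : Type*}

def ReachPreorder (_ : S → S → ℝ) : Type _ := S

instance (π : S → S → ℝ) : Preorder (ReachPreorder π) where
  le := kernelReach π
  le_refl _ := .refl
  le_trans _ _ _ := .trans

abbrev IrredClasses (π : S → S → ℝ) : Type _ := Antisymmetrization (ReachPreorder π) (· ≤ ·)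

def irredClassOf (π : S → S → ℝ) : S → IrredClasses π :=
  toAntisymmetrization (α := ReachPreorder π) (· ≤ ·)

variable {π : S → S → ℝ}

theorem irredClassOf_le_iff {x y : S} :
    irredClassOf π x ≤ irredClassOf π y ↔ kernelReach π x y := Iff.rfl

theorem irredClassOf_eq_iff {x y : S} :
    irredClassOf π x = irredClassOf π y ↔ kernelReach π x y ∧ kernelReach π y x := Quotient.eq

theorem irredClassOf_surjective : Surjective (irredClassOf π) := Quotient.mk_surjective

instance [Finite S] : Finite (IrredClasses π) := .of_surjective _ irredClassOf_surjective

instance [Nonempty S] : Nonempty (IrredClasses π) := .map (irredClassOf π) ‹_›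

theorem preimage_irredClassOf_singleton (x : S) :
    irredClassOf π ⁻¹' {irredClassOf π x} = {y | kernelReach π x y ∧ kernelReach π y x} :=
  Set.ext fun _ => irredClassOf_eq_iff.trans and_comm

theorem isIrredClass_iff {C : Set S} : isIrredClass π C ↔ ∃ q, C = irredClassOf π ⁻¹' {q} := by
  simp only [isIrredClass, ← preimage_irredClassOf_singleton]
  exact (irredClassOf_surjective.exists (p := fun q => C = irredClassOf π ⁻¹' {q})).symm

theorem preimage_irredClassOf_injective :
    Injective fun q : IrredClasses π => irredClassOf π ⁻¹' {q} :=
  irredClassOf_surjective.preimage_injective.comp Set.singleton_injective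

theorem exists_pos_of_covBy {q q' : IrredClasses π} (h : q ⋖ q') :
    ∃ i j, 0 < π i j ∧ irredClassOf π i = q ∧ irredClassOf π j = q' := by
  obtain ⟨x, rfl⟩ := irredClassOf_surjective q
  obtain ⟨y, rfl⟩ := irredClassOf_surjective q'
  exact (irredClassOf_le_iff.1 h.le).exists_rel_of_covBy
    (fun a b hab => irredClassOf_le_iff.2 (.single hab)) h

theorem irredClass_closed_iff_isMax [Finite S] {q : IrredClasses π} :
    (∀ i ∈ irredClassOf π ⁻¹' {q}, ∀ j, 0 < π i j → j ∈ irredClassOf π ⁻¹' {q}) ↔ IsMax q := by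
  refine ⟨fun hclosed => ?_, fun hq i hi j hij => ?_⟩
  · by_contra hq
    obtain ⟨q', hqq'⟩ := not_isMax_iff.1 hq
    obtain ⟨c, hqc, -⟩ := exists_covBy_le_of_lt hqq'
    obtain ⟨i, j, hij, rfl, rfl⟩ := exists_pos_of_covBy hqc
    exact hqc.ne (hclosed i rfl j hij).symm
  · exact (hq.eq_of_le (hi ▸ irredClassOf_le_iff.2 (.single hij))).symm

theorem strictMono_of_exists_pos {m : ℕ} {g : Fin m → IrredClasses π} (hg : Injective g)
    (hpos : ∀ (α : Fin m) (h : (α : ℕ) + 1 < m),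
      ∃ i ∈ irredClassOf π ⁻¹' {g α}, ∃ j ∈ irredClassOf π ⁻¹' {g ⟨α + 1, h⟩}, 0 < π i j) :
    StrictMono g := by
  refine Fin.strictMono_of_lt_mk_add_one fun α h => ?_
  obtain ⟨i, hi, j, hj, hij⟩ := hpos α h
  have hle : g α ≤ g ⟨α + 1, h⟩ := by
    rw [← Set.mem_singleton_iff.1 hi, ← Set.mem_singleton_iff.1 hj]
    exact irredClassOf_le_iff.2 (.single hij)
  exact hle.lt_of_ne (hg.ne (Fin.ne_of_val_ne (Nat.ne_add_one α)))

end IrredClasses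

theorem weakly_irreducible_class_labeling_general
    {S : Type*} [Fintype S] [Nonempty S] (π : S → S → ℝ)
    (hweak : ∀ x y : S, kernelReach π x y ∨ kernelReach π y x) :
    ∃ m : ℕ, 0 < m ∧
      ∃! Γ : Fin m → Set S,
        (∀ α, isIrredClass π (Γ α)) ∧
        Function.Injective Γ ∧
        (∀ C : Set S, isIrredClass π C → ∃ α, Γ α = C) ∧
        (∀ α : Fin m, ∀ h : (α : ℕ) + 1 < m,
          ∃ i ∈ Γ α, ∃ j ∈ Γ ⟨(α : ℕ) + 1, h⟩, 0 < π i j) ∧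
        (∀ α : Fin m,
          ((∀ i ∈ Γ α, ∀ j, 0 < π i j → j ∈ Γ α) ↔ (α : ℕ) = m - 1)) := by
  classical
  have : Std.Total (α := ReachPreorder π) (· ≤ ·) := ⟨hweak⟩
  let := Fintype.ofFinite (IrredClasses π)
  let e := Fintype.orderIsoFinOfCardEq (IrredClasses π) rfl
  refine ⟨_, Fintype.card_pos, fun α => irredClassOf π ⁻¹' {e α},
    ⟨fun α => isIrredClass_iff.2 ⟨_, rfl⟩, preimage_irredClassOf_injective.comp e.injective,
      fun C hC => ?_, fun α h => ?_, fun α => irredClass_closed_iff_isMax.trans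
        (e.isMax_apply.trans Fin.isMax_iff_val_eq_sub_one)⟩, ?_⟩
  · obtain ⟨q, rfl⟩ := isIrredClass_iff.1 hC
    exact ⟨e.symm q, by simp⟩
  · obtain ⟨i, j, hij, hi, hj⟩ :=
      exists_pos_of_covBy ((apply_covBy_apply_iff e).2 (Fin.covBy_mk_add_one α h))
    exact ⟨i, hi, j, hj, hij⟩
  rintro Γ ⟨hclass, hinj, hsurj, hpos, -⟩
  choose g hg using fun α => isIrredClass_iff.1 (hclass α)
  obtain rfl : Γ = fun α => irredClassOf π ⁻¹' {g α} := funext hg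
  have hg_inj : Injective g := hinj.of_comp (f := fun q => irredClassOf π ⁻¹' {q})
  have hg_surj : Surjective g := fun q => by
    obtain ⟨α, hα⟩ := hsurj _ (isIrredClass_iff.2 ⟨q, rfl⟩)
    exact ⟨α, preimage_irredClassOf_injective hα⟩
  have hge : g = e := ((strictMono_of_exists_pos hg_inj hpos).range_inj e.strictMono).1
    (by rw [hg_surj.range_eq, e.surjective.range_eq])
  rw [hge]

theorem weakly_irreducible_class_labeling
    {S : Type*} [Fintype S] [Nonempty S] (π : S → S → ℝ)
    (hπ : ∀ x y, 0 ≤ π x y)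
    (hweak : ∀ x y : S, kernelReach π x y ∨ kernelReach π y x) :
    ∃ m : ℕ, 0 < m ∧
      ∃! Γ : Fin m → Set S,
        (∀ α, isIrredClass π (Γ α)) ∧
        Function.Injective Γ ∧
        (∀ C : Set S, isIrredClass π C → ∃ α, Γ α = C) ∧
        (∀ α : Fin m, ∀ h : (α : ℕ) + 1 < m,
          ∃ i ∈ Γ α, ∃ j ∈ Γ ⟨(α : ℕ) + 1, h⟩, 0 < π i j) ∧
        (∀ α : Fin m,
          ((∀ i ∈ Γ α, ∀ j, 0 < π i j → j ∈ Γ α) ↔ (α : ℕ) = m - 1)) :=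
  weakly_irreducible_class_labeling_general π hweak
end

section
/- The two-lane flux function G_{γ_0,γ_1,r} satisfies the symmetry G_{γ_0,γ_1,r}(2-ρ) = G_{γ_1,γ_0,r}(ρ) = G_{γ_0,γ_1,1/r}(ρ) for all ρ ∈ [0,2], and the homogeneity G_{γ_0,γ_1,r}(ρ) = (γ_0+γ_1) G_{γ_0/(γ_0+γ_1), γ_1/(γ_0+γ_1), r}(ρ) whenever γ_0 + γ_1 ≠ 0. -/
/-- `ψ(ρ) = 1 + ((r-1)/(r+1))² ρ(ρ-2)`. -/
noncomputable def psiTL (r ρ : ℝ) : ℝ := 1 + ((r - 1) / (r + 1))^2 * ρ * (ρ - 2)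

/-- `φ(ρ) = (1/2)((r+1)/(r-1))(1 - √ψ(ρ))` for `r ≠ 1`, and `φ ≡ 0` for `r = 1`. -/
noncomputable def phiTL (r ρ : ℝ) : ℝ :=
  if r = 1 then 0 else (1 / 2) * ((r + 1) / (r - 1)) * (1 - Real.sqrt (psiTL r ρ))

/-- The two-lane flux function `G_{γ0,γ1,r}`. -/
noncomputable def GTL (γ0 γ1 r ρ : ℝ) : ℝ :=
  (γ0 + γ1) * (ρ / 2) * (1 - ρ / 2) + (γ0 - γ1) * (1 - ρ) * phiTL r ρ
    - (γ0 + γ1) * (phiTL r ρ)^2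

lemma psiTL_sym (r ρ : ℝ) : psiTL r (2 - ρ) = psiTL r ρ := by
  unfold psiTL; ring

lemma phiTL_sym (r ρ : ℝ) : phiTL r (2 - ρ) = phiTL r ρ := by
  unfold phiTL; rw [psiTL_sym]

lemma psiTL_inv (r ρ : ℝ) (hr : 0 < r) : psiTL (1 / r) ρ = psiTL r ρ := by
  have h0 : r ≠ 0 := hr.ne'
  have h1 : r + 1 ≠ 0 := by positivity
  unfold psiTL
  have : ((1 / r - 1) / (1 / r + 1))^2 = ((r - 1) / (r + 1))^2 := by
    rw [div_pow, div_pow, div_eq_div_iff (by positivity) (by positivity)]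
    field_simp
    ring
  rw [this]

lemma phiTL_inv (r ρ : ℝ) (hr : 0 < r) : phiTL (1 / r) ρ = -phiTL r ρ := by
  by_cases h : r = 1
  · simp [phiTL, h]
  · have h0 : r ≠ 0 := hr.ne'
    have h1 : r + 1 ≠ 0 := by positivity
    have h2 : r - 1 ≠ 0 := sub_ne_zero.mpr h
    have h3 : (1:ℝ) - r ≠ 0 := fun e => h (by linarith [sub_eq_zero.mp e])
    have hinv : (1 : ℝ) / r ≠ 1 := by
      intro he; apply h; field_simp at he; linarith
    unfold phiTL
    rw [if_neg hinv, if_neg h, psiTL_inv r ρ hr]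
    have : (1 / r + 1) / (1 / r - 1) = -((r + 1) / (r - 1)) := by
      field_simp
      ring
    rw [this]; ring

theorem GTL_symmetry_homogeneity (γ0 γ1 r : ℝ) (hr : 0 < r) :
    (∀ ρ ∈ Set.Icc (0:ℝ) 2,
      GTL γ0 γ1 r (2 - ρ) = GTL γ1 γ0 r ρ ∧ GTL γ1 γ0 r ρ = GTL γ0 γ1 (1 / r) ρ) ∧
    (γ0 + γ1 ≠ 0 → ∀ ρ ∈ Set.Icc (0:ℝ) 2,
      GTL γ0 γ1 r ρ =
        (γ0 + γ1) * GTL (γ0 / (γ0 + γ1)) (γ1 / (γ0 + γ1)) r ρ) := by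
  constructor
  · intro ρ _
    constructor
    · unfold GTL; rw [phiTL_sym]; ring
    · unfold GTL; rw [phiTL_inv r ρ hr]; ring
  · intro hγ ρ _
    unfold GTL
    field_simp
end

section
/- With G = G_{d,1-d,r} the two-lane flux function (γ_0 = d, γ_1 = 1-d, d ≥ 1/2, r > 1), the third derivative satisfies G'''(ρ) = 6r (r-1)^2/(r+1)^4 · ψ(ρ)^{-5/2} · [(2d-1)·4r/((r-1)(r+1)) + (1-ρ)], so G''' changes sign exactly once on [0,2]∩{ρ : ψ(ρ)>0}, at ρ̃_0 = 1 + (2d-1)·4r/((r-1)(r+1)) ≥ 1; consequently G'' is increasing on [0, ρ̃_0] and decreasing on [ρ̃_0, 2] (where defined). -/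
/-!
Put `b = (r - 1)/(r + 1)` and `u = ρ - 1`. Then `ψ = (1 - b²) + b² u²`, and expanding `φ²` with
`(√ψ)² = ψ` shows that, up to an additive constant, `G` is the reduced flux
`-u²/2 - β u + (α + β u) √ψ` with `α = 1/(2b²)` and `β = (2d - 1)/(2b)`.
Writing `s = √(c + a u²)`, the derivative of `N(u) s^k` is again of this shape,
`(N' (c + a u²) + k a u N) s^(k-2)`, so three differentiations give
`G⁽³⁾ = 3ac (βc - αa u) s⁻⁵`, whose sign is that of `ρ̃₀ - ρ`.
-/

open Real

noncomputable def sqrtQuad (a c x : ℝ) : ℝ := √(c + a * x ^ 2)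

section SqrtQuad

variable {a c : ℝ}

lemma sqrtQuad_pos (ha : 0 ≤ a) (hc : 0 < c) (x : ℝ) : 0 < sqrtQuad a c x :=
  Real.sqrt_pos.2 (by positivity)

lemma sqrtQuad_sq (ha : 0 ≤ a) (hc : 0 < c) (x : ℝ) : sqrtQuad a c x ^ 2 = c + a * x ^ 2 :=
  Real.sq_sqrt (by positivity)

lemma hasDerivAt_sqrtQuad (ha : 0 ≤ a) (hc : 0 < c) (x : ℝ) :
    HasDerivAt (sqrtQuad a c) (a * x / sqrtQuad a c x) x := by
  have hq : HasDerivAt (fun y => c + a * y ^ 2) (a * (2 * x)) x := by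
    simpa using ((hasDerivAt_pow 2 x).const_mul a).const_add c
  refine (hq.sqrt (by positivity)).congr_deriv ?_
  rw [sqrtQuad]
  ring

lemma HasDerivAt.mul_sqrtQuad_zpow (ha : 0 ≤ a) (hc : 0 < c) {N : ℝ → ℝ} {N' x : ℝ}
    (hN : HasDerivAt N N' x) (k : ℤ) :
    HasDerivAt (fun y => N y * sqrtQuad a c y ^ k)
      ((N' * (c + a * x ^ 2) + k * a * x * N x) * sqrtQuad a c x ^ (k - 2)) x := by
  have hs := sqrtQuad_pos ha hc x
  have hpow := (hasDerivAt_zpow k _ (Or.inl hs.ne')).comp x (hasDerivAt_sqrtQuad ha hc x)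
  refine (hN.mul hpow).congr_deriv ?_
  have hk : sqrtQuad a c x ^ k = sqrtQuad a c x ^ (k - 2) * sqrtQuad a c x ^ 2 := by
    rw [← zpow_natCast, ← zpow_add₀ hs.ne']; norm_num
  have hk1 : sqrtQuad a c x ^ (k - 1) = sqrtQuad a c x ^ (k - 2) * sqrtQuad a c x := by
    rw [← zpow_add_one₀ hs.ne']; ring_nf
  rw [Function.comp_apply, hk, hk1, sqrtQuad_sq ha hc]
  field_simp

end SqrtQuad

noncomputable def reducedFlux (a c α β x : ℝ) : ℝ :=
  -x ^ 2 / 2 - β * x + (α + β * x) * sqrtQuad a c x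

section ReducedFlux

variable {a c : ℝ} (α β : ℝ)

lemma hasDerivAt_reducedFlux (ha : 0 ≤ a) (hc : 0 < c) (x : ℝ) :
    HasDerivAt (reducedFlux a c α β)
      (-x - β + (β * c + α * a * x + 2 * β * a * x ^ 2) * sqrtQuad a c x ^ (-1 : ℤ)) x := by
  have hN : HasDerivAt (fun y => α + β * y) β x := by
    simpa using ((hasDerivAt_id x).const_mul β).const_add α
  have hP : HasDerivAt (fun y => -y ^ 2 / 2 - β * y) (-x - β) x := by
    refine (((hasDerivAt_pow 2 x).neg.div_const 2).sub
      ((hasDerivAt_id x).const_mul β)).congr_deriv ?_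
    norm_num; ring
  have h := hP.add (hN.mul_sqrtQuad_zpow ha hc 1)
  simp only [zpow_one] at h
  refine h.congr_deriv ?_
  rw [show (1 : ℤ) - 2 = -1 by norm_num]
  push_cast; ring

lemma hasDerivAt_reducedFlux_deriv (ha : 0 ≤ a) (hc : 0 < c) (x : ℝ) :
    HasDerivAt
      (fun y => -y - β + (β * c + α * a * y + 2 * β * a * y ^ 2) * sqrtQuad a c y ^ (-1 : ℤ))
      (-1 + (α * a * c + 3 * β * a * c * x + 2 * β * a ^ 2 * x ^ 3) * sqrtQuad a c x ^ (-3 : ℤ))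
      x := by
  have hN : HasDerivAt (fun y => β * c + α * a * y + 2 * β * a * y ^ 2)
      (α * a + 4 * β * a * x) x := by
    refine ((((hasDerivAt_id x).const_mul (α * a)).const_add (β * c)).add
      ((hasDerivAt_pow 2 x).const_mul (2 * β * a))).congr_deriv ?_
    norm_num; ring
  have hP : HasDerivAt (fun y => -y - β) (-1) x := (hasDerivAt_id x).neg.sub_const β
  refine (hP.add (hN.mul_sqrtQuad_zpow ha hc (-1))).congr_deriv ?_
  rw [show (-1 : ℤ) - 2 = -3 by norm_num]
  push_cast; ring

lemma hasDerivAt_reducedFlux_deriv_deriv (ha : 0 ≤ a) (hc : 0 < c) (x : ℝ) :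
    HasDerivAt
      (fun y => -1 + (α * a * c + 3 * β * a * c * y + 2 * β * a ^ 2 * y ^ 3) *
        sqrtQuad a c y ^ (-3 : ℤ))
      (3 * a * c * (β * c - α * a * x) * sqrtQuad a c x ^ (-5 : ℤ)) x := by
  have hN : HasDerivAt (fun y => α * a * c + 3 * β * a * c * y + 2 * β * a ^ 2 * y ^ 3)
      (3 * β * a * c + 6 * β * a ^ 2 * x ^ 2) x := by
    refine ((((hasDerivAt_id x).const_mul (3 * β * a * c)).const_add (α * a * c)).add
      ((hasDerivAt_pow 3 x).const_mul (2 * β * a ^ 2))).congr_deriv ?_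
    norm_num; ring
  refine ((hN.mul_sqrtQuad_zpow ha hc (-3)).const_add (-1)).congr_deriv ?_
  rw [show (-3 : ℤ) - 2 = -5 by norm_num]
  push_cast; ring

lemma iteratedDeriv_two_reducedFlux (ha : 0 ≤ a) (hc : 0 < c) :
    iteratedDeriv 2 (reducedFlux a c α β) = fun x =>
      -1 + (α * a * c + 3 * β * a * c * x + 2 * β * a ^ 2 * x ^ 3) *
        sqrtQuad a c x ^ (-3 : ℤ) := by
  rw [iteratedDeriv_succ, iteratedDeriv_one,
    funext fun x => (hasDerivAt_reducedFlux α β ha hc x).deriv]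
  exact funext fun x => (hasDerivAt_reducedFlux_deriv α β ha hc x).deriv

lemma iteratedDeriv_three_reducedFlux (ha : 0 ≤ a) (hc : 0 < c) :
    iteratedDeriv 3 (reducedFlux a c α β) = fun x =>
      3 * a * c * (β * c - α * a * x) * sqrtQuad a c x ^ (-5 : ℤ) := by
  rw [iteratedDeriv_succ, iteratedDeriv_two_reducedFlux α β ha hc]
  exact funext fun x => (hasDerivAt_reducedFlux_deriv_deriv α β ha hc x).deriv

lemma differentiable_iteratedDeriv_two_reducedFlux (ha : 0 ≤ a) (hc : 0 < c) :
    Differentiable ℝ (iteratedDeriv 2 (reducedFlux a c α β)) := by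
  rw [iteratedDeriv_two_reducedFlux α β ha hc]
  exact fun x => (hasDerivAt_reducedFlux_deriv_deriv α β ha hc x).differentiableAt

end ReducedFlux

noncomputable def ratioTL (r : ℝ) : ℝ := (r - 1) / (r + 1)

section TwoLane

variable {r : ℝ}

lemma ratioTL_pos (hr : 1 < r) : 0 < ratioTL r :=
  div_pos (by linarith) (by linarith)

lemma one_sub_ratioTL_sq_pos (hr : 1 < r) : 0 < 1 - ratioTL r ^ 2 := by
  have h : ratioTL r < 1 := (div_lt_one (by linarith)).2 (by linarith)
  nlinarith [ratioTL_pos hr]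

lemma psiTL_eq (r ρ : ℝ) : psiTL r ρ = (1 - ratioTL r ^ 2) + ratioTL r ^ 2 * (ρ - 1) ^ 2 := by
  rw [psiTL, ratioTL]
  ring

lemma sqrt_psiTL (r ρ : ℝ) :
    √(psiTL r ρ) = sqrtQuad (ratioTL r ^ 2) (1 - ratioTL r ^ 2) (ρ - 1) := by
  rw [psiTL_eq, sqrtQuad, add_comm]

lemma psiTL_pos (hr : 1 < r) (ρ : ℝ) : 0 < psiTL r ρ := by
  rw [psiTL_eq]
  have := one_sub_ratioTL_sq_pos hr
  positivity

lemma GTL_eq_reducedFlux (hr : 1 < r) (d ρ : ℝ) :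
    GTL d (1 - d) r ρ = (1 / 2 - 1 / (2 * ratioTL r ^ 2)) +
      reducedFlux (ratioTL r ^ 2) (1 - ratioTL r ^ 2) (1 / (2 * ratioTL r ^ 2))
        ((2 * d - 1) / (2 * ratioTL r)) (ρ - 1) := by
  have hb := (ratioTL_pos hr).ne'
  have hs := sqrtQuad_sq (sq_nonneg (ratioTL r)) (one_sub_ratioTL_sq_pos hr) (ρ - 1)
  have hphi : phiTL r ρ = (1 - sqrtQuad (ratioTL r ^ 2) (1 - ratioTL r ^ 2) (ρ - 1)) /
      (2 * ratioTL r) := by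
    rw [phiTL, if_neg (by linarith), sqrt_psiTL, ratioTL]
    field_simp
  rw [GTL, hphi, reducedFlux]
  field_simp
  linear_combination -hs

lemma iteratedDeriv_GTL (hr : 1 < r) (d : ℝ) {n : ℕ} (hn : 0 < n) :
    iteratedDeriv n (fun ρ => GTL d (1 - d) r ρ) = fun ρ =>
      iteratedDeriv n (reducedFlux (ratioTL r ^ 2) (1 - ratioTL r ^ 2) (1 / (2 * ratioTL r ^ 2))
        ((2 * d - 1) / (2 * ratioTL r))) (ρ - 1) := by
  simp_rw [GTL_eq_reducedFlux hr]
  ext ρ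
  rw [iteratedDeriv_const_add hn, iteratedDeriv_comp_sub_const]

lemma iteratedDeriv_three_GTL (hr : 1 < r) (d ρ : ℝ) :
    iteratedDeriv 3 (fun ρ => GTL d (1 - d) r ρ) ρ =
      6 * r * ((r - 1)^2 / (r + 1)^4) * (psiTL r ρ) ^ (-(5:ℝ) / 2) *
        ((2 * d - 1) * (4 * r) / ((r - 1) * (r + 1)) + (1 - ρ)) := by
  have hpow : psiTL r ρ ^ (-(5:ℝ) / 2) = √(psiTL r ρ) ^ (-5 : ℤ) := by
    rw [sqrt_eq_rpow, ← rpow_intCast, ← rpow_mul (psiTL_pos hr ρ).le]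
    norm_num
  rw [iteratedDeriv_GTL hr d (by norm_num),
    iteratedDeriv_three_reducedFlux _ _ (sq_nonneg _) (one_sub_ratioTL_sq_pos hr),
    hpow, sqrt_psiTL, ratioTL]
  have h1 : r - 1 ≠ 0 := by linarith
  have h2 : r + 1 ≠ 0 := by linarith
  field_simp
  ring

lemma differentiable_iteratedDeriv_two_GTL (hr : 1 < r) (d : ℝ) :
    Differentiable ℝ (iteratedDeriv 2 (fun ρ => GTL d (1 - d) r ρ)) := by
  rw [iteratedDeriv_GTL hr d (by norm_num)]
  exact (differentiable_iteratedDeriv_two_reducedFlux _ _ (sq_nonneg _)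
    (one_sub_ratioTL_sq_pos hr)).comp (differentiable_id.sub_const 1)

end TwoLane

theorem GTL_third_derivative (d r : ℝ) (hd : 1 / 2 ≤ d) (hr : 1 < r) :
    let G : ℝ → ℝ := fun ρ => GTL d (1 - d) r ρ
    let ρ0 : ℝ := 1 + (2 * d - 1) * (4 * r) / ((r - 1) * (r + 1))
    (∀ ρ ∈ Set.Icc (0:ℝ) 2,
      iteratedDeriv 3 G ρ =
        6 * r * ((r - 1)^2 / (r + 1)^4) * (psiTL r ρ) ^ (-(5:ℝ) / 2) *
          ((2 * d - 1) * (4 * r) / ((r - 1) * (r + 1)) + (1 - ρ))) ∧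
    1 ≤ ρ0 ∧
    (∀ ρ ∈ Set.Icc (0:ℝ) 2,
      (ρ < ρ0 → 0 < iteratedDeriv 3 G ρ) ∧ (ρ0 < ρ → iteratedDeriv 3 G ρ < 0)) ∧
    StrictMonoOn (iteratedDeriv 2 G) (Set.Icc 0 (min ρ0 2)) ∧
    StrictAntiOn (iteratedDeriv 2 G) (Set.Icc ρ0 2) := by
  intro G ρ0
  have hr1 : 0 < r - 1 := by linarith
  have hscale : ∀ ρ, 0 < 6 * r * ((r - 1)^2 / (r + 1)^4) * (psiTL r ρ) ^ (-(5:ℝ) / 2) :=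
    fun ρ => mul_pos (by positivity) (rpow_pos_of_pos (psiTL_pos hr ρ) _)
  have hpos : ∀ ρ < ρ0, 0 < iteratedDeriv 3 G ρ := fun ρ hρ => by
    rw [iteratedDeriv_three_GTL hr]
    exact mul_pos (hscale ρ) (by linarith)
  have hneg : ∀ ρ, ρ0 < ρ → iteratedDeriv 3 G ρ < 0 := fun ρ hρ => by
    rw [iteratedDeriv_three_GTL hr]
    exact mul_neg_of_pos_of_neg (hscale ρ) (by linarith)
  have hG2 := differentiable_iteratedDeriv_two_GTL hr d
  have hderiv : deriv (iteratedDeriv 2 G) = iteratedDeriv 3 G := iteratedDeriv_succ.symm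
  refine ⟨fun ρ _ => iteratedDeriv_three_GTL hr d ρ, ?_, fun ρ _ => ⟨hpos ρ, hneg ρ⟩, ?_, ?_⟩
  · have hd1 : 0 ≤ 2 * d - 1 := by linarith
    have hshift : 0 ≤ (2 * d - 1) * (4 * r) / ((r - 1) * (r + 1)) := by positivity
    linarith
  · refine (strictMonoOn_of_deriv_pos (convex_Iic ρ0) hG2.continuous.continuousOn ?_).mono
      fun x hx => hx.2.trans (min_le_left _ _)
    intro x hx
    rw [interior_Iic] at hx
    exact hderiv ▸ hpos x hx
  · refine (strictAntiOn_of_deriv_neg (convex_Ici ρ0) hG2.continuous.continuousOn ?_).mono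
      fun x hx => hx.1
    intro x hx
    rw [interior_Ici] at hx
    exact hderiv ▸ hneg x hx
end

section
/- With G = G_{d,1-d,r} as above, G''(0) = -(r²+1)/(r+1)² - (2d-1)·(r-1)/(r+1)·[1 + 2r/(r+1)²] < 0 for d ≥ 1/2 and r > 1, and G''(1) = -1 + (r+1)/(4√r), a value independent of d; moreover G''(1) > 0 if and only if r > (2+√3)². -/
open Real

theorem iteratedDeriv_two_eq_of_hasDerivAt {f f' : ℝ → ℝ} {f'' x : ℝ}
    (hf : ∀ y, HasDerivAt f (f' y) y) (hf' : HasDerivAt f' f'' x) :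
    iteratedDeriv 2 f x = f'' := by
  rw [iteratedDeriv_succ, iteratedDeriv_one, funext fun y => (hf y).deriv]
  exact hf'.deriv

theorem four_mul_lt_sq_add_one_iff {t : ℝ} (ht : 2 - √3 < t) :
    4 * t < t ^ 2 + 1 ↔ 2 + √3 < t := by
  have h3 : √3 ^ 2 = 3 := sq_sqrt (by norm_num)
  have hfactor : t ^ 2 + 1 - 4 * t = (t - 2 - √3) * (t - 2 + √3) := by linear_combination h3
  rw [← sub_pos, hfactor, mul_pos_iff_of_pos_right (by linarith)]
  constructor <;> intro h <;> linarith

namespace TwoLane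

variable {r : ℝ}

theorem sq_ratio_lt_one (hr : 0 < r) : ((r - 1) / (r + 1)) ^ 2 < 1 := by
  rw [div_pow, div_lt_one (by positivity)]
  nlinarith

theorem psiTL_eq (r ρ : ℝ) :
    psiTL r ρ = 1 - ((r - 1) / (r + 1)) ^ 2 + ((r - 1) / (r + 1)) ^ 2 * (1 - ρ) ^ 2 := by
  unfold psiTL; ring

theorem psiTL_pos (hr : 0 < r) (ρ : ℝ) : 0 < psiTL r ρ := by
  rw [psiTL_eq]
  nlinarith [sq_ratio_lt_one hr, sq_nonneg ((r - 1) / (r + 1) * (1 - ρ))]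

theorem psiTL_zero (r : ℝ) : psiTL r 0 = 1 := by simp [psiTL]

theorem sqrt_psiTL_one (hr : 0 < r) : √(psiTL r 1) = 2 * √r / (r + 1) := by
  have hsq : (2 * √r / (r + 1)) ^ 2 = psiTL r 1 := by
    rw [div_pow, mul_pow, sq_sqrt hr.le, psiTL]
    field_simp
    ring
  rw [← hsq, sqrt_sq (by positivity)]

theorem hasDerivAt_psiTL (r ρ : ℝ) :
    HasDerivAt (psiTL r) (2 * ((r - 1) / (r + 1)) ^ 2 * (ρ - 1)) ρ := by
  have h := (((hasDerivAt_id' ρ).const_mul (((r - 1) / (r + 1)) ^ 2)).mul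
    ((hasDerivAt_id' ρ).sub_const 2)).const_add 1
  exact h.congr_deriv (by ring)

theorem hasDerivAt_sqrt_psiTL (hr : 0 < r) (ρ : ℝ) :
    HasDerivAt (fun x => √(psiTL r x)) (((r - 1) / (r + 1)) ^ 2 * (ρ - 1) / √(psiTL r ρ)) ρ :=
  ((hasDerivAt_psiTL r ρ).sqrt (psiTL_pos hr ρ).ne').congr_deriv (by ring)

theorem phiTL_of_ne (hr : r ≠ 1) (ρ : ℝ) :
    phiTL r ρ = 1 / 2 * ((r + 1) / (r - 1)) * (1 - √(psiTL r ρ)) := if_neg hr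

theorem phiTL_zero (r : ℝ) : phiTL r 0 = 0 := by
  unfold phiTL; simp [psiTL_zero]

noncomputable def dphiTL (r ρ : ℝ) : ℝ := (r - 1) / (r + 1) * (1 - ρ) / (2 * √(psiTL r ρ))

noncomputable def d2phiTL (r ρ : ℝ) : ℝ :=
  (r - 1) / (r + 1) * (((r - 1) / (r + 1)) ^ 2 - 1) / (2 * √(psiTL r ρ) ^ 3)

theorem dphiTL_one (r : ℝ) : dphiTL r 1 = 0 := by simp [dphiTL]

theorem hasDerivAt_phiTL (hr : 1 < r) (ρ : ℝ) : HasDerivAt (phiTL r) (dphiTL r ρ) ρ := by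
  have h := ((hasDerivAt_sqrt_psiTL (by linarith) ρ).const_sub 1).const_mul
    (1 / 2 * ((r + 1) / (r - 1)))
  rw [show phiTL r = _ from funext (phiTL_of_ne hr.ne')]
  refine h.congr_deriv ?_
  have hs := (sqrt_pos.mpr (psiTL_pos (r := r) (by linarith) ρ)).ne'
  have h1 : r - 1 ≠ 0 := by linarith
  have h2 : r + 1 ≠ 0 := by linarith
  unfold dphiTL
  field_simp
  ring

theorem hasDerivAt_dphiTL (hr : 0 < r) (ρ : ℝ) : HasDerivAt (dphiTL r) (d2phiTL r ρ) ρ := by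
  have h := (((hasDerivAt_id' ρ).const_sub 1).const_mul ((r - 1) / (r + 1))).div
    ((hasDerivAt_sqrt_psiTL hr ρ).const_mul 2) (by positivity [psiTL_pos hr ρ])
  refine h.congr_deriv ?_
  have hs := (sqrt_pos.mpr (psiTL_pos hr ρ)).ne'
  have h2 : r + 1 ≠ 0 := by linarith
  have hk : ((r - 1) / (r + 1)) ^ 2 - 1
      = ((r - 1) / (r + 1)) ^ 2 * (1 - ρ) ^ 2 - √(psiTL r ρ) ^ 2 := by
    rw [sq_sqrt (psiTL_pos hr ρ).le, psiTL_eq]; ring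
  rw [d2phiTL, hk]
  field_simp
  ring

variable (γ₀ γ₁ : ℝ)

noncomputable def dGTL (r ρ : ℝ) : ℝ :=
  (γ₀ + γ₁) * (1 / 2 - ρ / 2 - 2 * phiTL r ρ * dphiTL r ρ)
    + (γ₀ - γ₁) * ((1 - ρ) * dphiTL r ρ - phiTL r ρ)

theorem hasDerivAt_GTL (hr : 1 < r) (ρ : ℝ) :
    HasDerivAt (GTL γ₀ γ₁ r) (dGTL γ₀ γ₁ r ρ) ρ := by
  have hφ := hasDerivAt_phiTL hr ρ
  have hquad : HasDerivAt (fun x : ℝ => x / 2 * (1 - x / 2)) (1 / 2 - ρ / 2) ρ :=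
    (((hasDerivAt_id' ρ).div_const 2).mul (((hasDerivAt_id' ρ).div_const 2).const_sub 1))
      |>.congr_deriv (by ring)
  have h := ((hquad.const_mul (γ₀ + γ₁)).add
    ((((hasDerivAt_id' ρ).const_sub 1).const_mul (γ₀ - γ₁)).mul hφ)).sub
    ((hφ.pow 2).const_mul (γ₀ + γ₁))
  refine HasDerivAt.congr_deriv (h.congr_of_eventuallyEq (.of_forall fun x => ?_)) ?_
  · simp only [GTL, Pi.add_apply, Pi.sub_apply, Pi.mul_apply, Pi.pow_apply]; ring
  · simp only [dGTL]; push_cast; ring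

theorem hasDerivAt_dGTL (hr : 1 < r) (ρ : ℝ) :
    HasDerivAt (dGTL γ₀ γ₁ r)
      ((γ₀ + γ₁) * (-1 / 2 - 2 * dphiTL r ρ ^ 2 - 2 * phiTL r ρ * d2phiTL r ρ)
        + (γ₀ - γ₁) * ((1 - ρ) * d2phiTL r ρ - 2 * dphiTL r ρ)) ρ := by
  have hφ := hasDerivAt_phiTL hr ρ
  have hφ' := hasDerivAt_dphiTL (by linarith) ρ
  have h := ((((hasDerivAt_id' ρ).div_const 2).const_sub (1 / 2)).sub
    ((hφ.const_mul 2).mul hφ')).const_mul (γ₀ + γ₁) |>.add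
    (((((hasDerivAt_id' ρ).const_sub 1).mul hφ').sub hφ).const_mul (γ₀ - γ₁))
  exact h.congr_deriv (by ring)

theorem iteratedDeriv_two_GTL (hr : 1 < r) (ρ : ℝ) :
    iteratedDeriv 2 (GTL γ₀ γ₁ r) ρ =
      (γ₀ + γ₁) * (-1 / 2 - 2 * dphiTL r ρ ^ 2 - 2 * phiTL r ρ * d2phiTL r ρ)
        + (γ₀ - γ₁) * ((1 - ρ) * d2phiTL r ρ - 2 * dphiTL r ρ) :=
  iteratedDeriv_two_eq_of_hasDerivAt (hasDerivAt_GTL γ₀ γ₁ hr) (hasDerivAt_dGTL γ₀ γ₁ hr ρ)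

theorem iteratedDeriv_two_GTL_zero (hr : 1 < r) :
    iteratedDeriv 2 (GTL γ₀ γ₁ r) 0 = -(γ₀ + γ₁) * ((r ^ 2 + 1) / (r + 1) ^ 2)
      - (γ₀ - γ₁) * ((r - 1) / (r + 1)) * (1 + 2 * r / (r + 1) ^ 2) := by
  have h : r + 1 ≠ 0 := by linarith
  rw [iteratedDeriv_two_GTL γ₀ γ₁ hr, phiTL_zero, dphiTL, d2phiTL, psiTL_zero, sqrt_one]
  field_simp
  ring

theorem iteratedDeriv_two_GTL_one (hr : 1 < r) :
    iteratedDeriv 2 (GTL γ₀ γ₁ r) 1 = (γ₀ + γ₁) * (-1 + (r + 1) / (4 * √r)) := by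
  have hr₀ : 0 < r := by linarith
  rw [iteratedDeriv_two_GTL γ₀ γ₁ hr, dphiTL_one, phiTL_of_ne hr.ne', d2phiTL, sqrt_psiTL_one hr₀]
  have ht : 1 < √r := by rwa [lt_sqrt zero_le_one, one_pow]
  have hsq : r = √r ^ 2 := (sq_sqrt hr₀.le).symm
  generalize √r = t at hsq ht ⊢
  subst hsq
  have h₁ : t ^ 2 - 1 ≠ 0 := by nlinarith
  have h₂ : t ≠ 0 := by positivity
  field_simp
  ring

theorem four_mul_sqrt_lt_add_one_iff (hr : 1 ≤ r) : 4 * √r < r + 1 ↔ (2 + √3) ^ 2 < r := by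
  have ht : 1 ≤ √r := by simpa using sqrt_le_sqrt hr
  have h3 : 1 < √3 := by rw [lt_sqrt zero_le_one]; norm_num
  rw [← lt_sqrt (by positivity), ← four_mul_lt_sq_add_one_iff (by linarith),
    sq_sqrt (by linarith)]

end TwoLane

theorem GTL_second_derivative_values (d r : ℝ) (hd : 1 / 2 ≤ d) (hr : 1 < r) :
    let G : ℝ → ℝ := fun ρ => GTL d (1 - d) r ρ
    iteratedDeriv 2 G 0 =
        -(r^2 + 1) / (r + 1)^2 - (2 * d - 1) * ((r - 1) / (r + 1)) * (1 + 2 * r / (r + 1)^2) ∧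
    iteratedDeriv 2 G 0 < 0 ∧
    iteratedDeriv 2 G 1 = -1 + (r + 1) / (4 * Real.sqrt r) ∧
    (0 < iteratedDeriv 2 G 1 ↔ (2 + Real.sqrt 3)^2 < r) := by
  intro G
  have h₀ := TwoLane.iteratedDeriv_two_GTL_zero d (1 - d) hr
  have h₁ := TwoLane.iteratedDeriv_two_GTL_one d (1 - d) hr
  rw [show d + (1 - d) = 1 by ring] at h₀ h₁
  rw [one_mul] at h₁
  rw [show d - (1 - d) = 2 * d - 1 by ring] at h₀
  refine ⟨by rw [h₀]; ring, ?_, h₁, ?_⟩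
  · have hk : 0 ≤ (2 * d - 1) * ((r - 1) / (r + 1)) * (1 + 2 * r / (r + 1) ^ 2) :=
      mul_nonneg (mul_nonneg (by linarith) (div_nonneg (by linarith) (by linarith)))
        (by positivity)
    have hr₁ : 0 < (r ^ 2 + 1) / (r + 1) ^ 2 := by positivity
    rw [h₀]
    linarith
  · rw [h₁, neg_add_eq_sub, sub_pos, one_lt_div (by positivity),
      TwoLane.four_mul_sqrt_lt_add_one_iff hr.le]
end

section
/- Let f̄ : [0,2] → ℝ be a C¹ nondecreasing function with m = f̄(0), M = f̄(2), and let C = 1/sup_{r∈[0,2]} f̄'(r) (assuming sup f̄' > 0). For δ > 0 and u,v ∈ [m,M], define ψ^{δ,+}(u,v;r) = 1_{u > f̄(r)+δ, v < f̄(r)-δ} and ψ^{δ,-}(u,v;r) = 1_{u < f̄(r)-δ, v > f̄(r)+δ}. Then ∫₀² [ψ^{δ,+}(u,v;r) + ψ^{δ,-}(u,v;r)] dr ≥ C(|u-v| - 2δ). -/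
/-!
Let `L` be the supremum of `f'` on `[0, 2]` and suppose `u ≥ v`. Walking from `0` to `2`, let `b`
be the first time `f` reaches `u - δ` and `a` the last time before `b` at which `f ≤ v + δ`; on
`(a, b)` the value of `f` lies strictly between `v + δ` and `u - δ`, so the first indicator is `1`
there. By the mean value theorem `u - v - 2δ ≤ f b - f a ≤ L (b - a)`, so the integral is at least
`b - a ≥ (u - v - 2δ) / L`. The case `u ≤ v` is symmetric, with the second indicator.
-/

open MeasureTheory Set

variable {f : ℝ → ℝ} {p q α β : ℝ}

theorem exists_Ioo_subset_preimage_Ioo (hf : ContinuousOn f (Icc p q)) (hpq : p ≤ q)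
    (hp : f p ≤ α) (hq : β ≤ f q) :
    ∃ a b, p ≤ a ∧ a ≤ b ∧ b ≤ q ∧ f a ≤ α ∧ β ≤ f b ∧ Ioo a b ⊆ f ⁻¹' Ioo α β := by
  set T := Icc p q ∩ f ⁻¹' Ici β
  have hT : IsCompact T := isCompact_Icc.of_isClosed_subset
    (hf.preimage_isClosed_of_isClosed isClosed_Icc isClosed_Ici) inter_subset_left
  have hbT : sInf T ∈ T := hT.sInf_mem ⟨q, ⟨hpq, le_rfl⟩, hq⟩
  set b := sInf T
  set S := Icc p b ∩ f ⁻¹' Iic α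
  have hS : IsCompact S := isCompact_Icc.of_isClosed_subset
    ((hf.mono (Icc_subset_Icc_right hbT.1.2)).preimage_isClosed_of_isClosed isClosed_Icc
      isClosed_Iic) inter_subset_left
  have haS : sSup S ∈ S := hS.sSup_mem ⟨p, ⟨le_rfl, hbT.1.1⟩, hp⟩
  refine ⟨sSup S, b, haS.1.1, haS.1.2, hbT.1.2, haS.2, hbT.2, fun r ⟨har, hrb⟩ => ⟨?_, ?_⟩⟩
  · have hr : r ∈ Icc p b := ⟨haS.1.1.trans har.le, hrb.le⟩
    by_contra! hfr
    exact (le_csSup hS.bddAbove ⟨hr, hfr⟩).not_gt har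
  · have hr : r ∈ Icc p q := ⟨haS.1.1.trans har.le, hrb.le.trans hbT.1.2⟩
    by_contra! hfr
    exact (csInf_le hT.bddBelow ⟨hr, hfr⟩).not_gt hrb

theorem div_le_volume_preimage_Ioo_inter_Ioc {L : ℝ} (hf : ContinuousOn f (Icc p q))
    (hf' : DifferentiableOn ℝ f (Ioo p q)) (hderiv : ∀ x ∈ Ioo p q, deriv f x ≤ L) (hL : 0 < L)
    (hpq : p ≤ q) (hp : f p ≤ α) (hq : β ≤ f q) :
    (β - α) / L ≤ volume.real (f ⁻¹' Ioo α β ∩ Ioc p q) := by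
  obtain ⟨a, b, hpa, hab, hbq, hfa, hfb, hsub⟩ := exists_Ioo_subset_preimage_Ioo hf hpq hp hq
  have hgrowth : f b - f a ≤ L * (b - a) :=
    (convex_Icc p q).image_sub_le_mul_sub_of_deriv_le hf (by rwa [interior_Icc])
      (by rwa [interior_Icc]) a ⟨hpa, hab.trans hbq⟩ b ⟨hpa.trans hab, hbq⟩ hab
  calc (β - α) / L ≤ b - a := by rw [div_le_iff₀ hL]; linarith
    _ = volume.real (Ioo a b) := (Real.volume_real_Ioo_of_le hab).symm
    _ ≤ volume.real (f ⁻¹' Ioo α β ∩ Ioc p q) :=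
      measureReal_mono (subset_inter hsub (Ioo_subset_Ioc_self.trans (Ioc_subset_Ioc hpa hbq)))
        ((measure_mono inter_subset_right).trans_lt measure_Ioc_lt_top).ne

theorem integral_indicator_one_eq_volume_real_inter_Ioc {s : Set ℝ} (hs : MeasurableSet s)
    (hpq : p ≤ q) :
    ∫ r in p..q, s.indicator 1 r = volume.real (s ∩ Ioc p q) := by
  rw [intervalIntegral.integral_of_le hpq, integral_indicator_one hs, measureReal_restrict_apply hs]

theorem ite_add_ite_eq_indicator_Ioo_union_Ioo {δ : ℝ} (hδ : 0 ≤ δ) (u v x : ℝ) :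
    (if x + δ < u ∧ v < x - δ then (1:ℝ) else 0) + (if u < x - δ ∧ x + δ < v then 1 else 0) =
      (Ioo (v + δ) (u - δ) ∪ Ioo (u + δ) (v - δ)).indicator 1 x := by
  classical
  rw [indicator_apply]
  simp only [mem_union, mem_Ioo, Pi.one_apply]
  split_ifs <;> grind

theorem kruzkov_indicator_integral_bound_general
    (f : ℝ → ℝ) (hf : ContDiff ℝ 1 f)
    (hsup : 0 < sSup ((fun r => deriv f r) '' Set.Icc (0:ℝ) 2))
    (δ : ℝ) (hδ : 0 < δ)
    (u v : ℝ) (hu : u ∈ Set.Icc (f 0) (f 2)) (hv : v ∈ Set.Icc (f 0) (f 2)) :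
    (1 / sSup ((fun r => deriv f r) '' Set.Icc (0:ℝ) 2)) * (|u - v| - 2 * δ) ≤
      ∫ r in (0:ℝ)..2,
        ((if f r + δ < u ∧ v < f r - δ then (1:ℝ) else 0) +
          (if u < f r - δ ∧ f r + δ < v then (1:ℝ) else 0)) := by
  set L := sSup ((fun r => deriv f r) '' Icc (0:ℝ) 2)
  set t := Ioo (v + δ) (u - δ) ∪ Ioo (u + δ) (v - δ)
  have hs : MeasurableSet (f ⁻¹' t) :=
    hf.continuous.measurable (measurableSet_Ioo.union measurableSet_Ioo)
  have hderiv : ∀ x ∈ Ioo (0:ℝ) 2, deriv f x ≤ L := fun x hx =>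
    le_csSup (isCompact_Icc.image (hf.continuous_deriv le_rfl)).bddAbove
      ⟨x, Ioo_subset_Icc_self hx, rfl⟩
  have hlevel : ∀ α β, f 0 ≤ α → β ≤ f 2 → Ioo α β ⊆ t →
      (β - α) / L ≤ ∫ r in (0:ℝ)..2, t.indicator 1 (f r) := fun α β h0 h2 hsub => by
    change _ ≤ ∫ r in (0:ℝ)..2, (f ⁻¹' t).indicator 1 r
    rw [integral_indicator_one_eq_volume_real_inter_Ioc hs zero_le_two]
    exact (div_le_volume_preimage_Ioo_inter_Ioc hf.continuous.continuousOn
      (hf.differentiable one_ne_zero).differentiableOn hderiv hsup zero_le_two h0 h2).trans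
      (measureReal_mono (inter_subset_inter_left _ (preimage_mono hsub))
        ((measure_mono inter_subset_right).trans_lt measure_Ioc_lt_top).ne)
  rw [intervalIntegral.integral_congr fun r _ =>
    ite_add_ite_eq_indicator_Ioo_union_Ioo hδ.le u v (f r), one_div_mul_eq_div]
  rcases le_total v u with hvu | huv
  · rw [abs_of_nonneg (sub_nonneg.2 hvu)]
    convert hlevel (v + δ) (u - δ) (by linarith [hv.1]) (by linarith [hu.2])
      subset_union_left using 2
    ring
  · rw [abs_of_nonpos (sub_nonpos.2 huv)]
    convert hlevel (u + δ) (v - δ) (by linarith [hu.1]) (by linarith [hv.2])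
      subset_union_right using 2
    ring

theorem kruzkov_indicator_integral_bound
    (f : ℝ → ℝ) (hf : ContDiff ℝ 1 f) (hmono : MonotoneOn f (Set.Icc 0 2))
    (hsup : 0 < sSup ((fun r => deriv f r) '' Set.Icc (0:ℝ) 2))
    (δ : ℝ) (hδ : 0 < δ)
    (u v : ℝ) (hu : u ∈ Set.Icc (f 0) (f 2)) (hv : v ∈ Set.Icc (f 0) (f 2)) :
    (1 / sSup ((fun r => deriv f r) '' Set.Icc (0:ℝ) 2)) * (|u - v| - 2 * δ) ≤
      ∫ r in (0:ℝ)..2,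
        ((if f r + δ < u ∧ v < f r - δ then (1:ℝ) else 0) +
          (if u < f r - δ ∧ f r + δ < v then (1:ℝ) else 0)) :=
  kruzkov_indicator_integral_bound_general f hf hsup δ hδ u v hu hv
end

section
/- For the n-lane totally asymmetric model of Example with p = 1, q = 0 and drifts d_i > 0 (flux on lane i given by d_i α(1-α)), the equilibrium lane densities are ρ̃_i(ρ) = (ρ-i)1_{[i,i+1]}(ρ) + 1_{ρ>i+1}, and the total flux function is G^n(ρ) = Σ_{i=0}^{n-1} d_i (ρ-i)(i+1-ρ) 1_{(i,i+1)}(ρ) for ρ ∈ [0,n]. G^n is continuous on [0,n], vanishes exactly at integer points, and attains local maximum value d_i/4 at ρ = i + 1/2. -/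
/-!
Lane `i` has density `ρ̃ᵢ(ρ) = clamp(ρ - i, 0, 1)`, so `ρ̃ᵢ(1 - ρ̃ᵢ)` is the parabola
`(ρ - i)(i + 1 - ρ)` on `(i, i + 1)` and vanishes elsewhere. On each `[i, i + 1]` only lane `i`
contributes to the total flux, which is therefore `dᵢ (ρ - i)(i + 1 - ρ)` there: a parabola with
maximum `dᵢ / 4` at the midpoint, positive inside and zero at the endpoints.
-/

open Set Finset

namespace NLaneFlux

/-- `ρ̃ᵢ = laneDensity i`: lane `i` fills up while the total density runs through `[i, i + 1]`. -/
def laneDensity (a ρ : ℝ) : ℝ := min (max (ρ - a) 0) 1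

/-- The total equilibrium flux `G^n` of `n` lanes with drifts `d`. -/
def totalFlux (n : ℕ) (d : ℕ → ℝ) (ρ : ℝ) : ℝ :=
  ∑ i ∈ range n, d i * laneDensity i ρ * (1 - laneDensity i ρ)

section laneDensity

variable {a ρ : ℝ}

theorem laneDensity_of_le (h : ρ ≤ a) : laneDensity a ρ = 0 := by
  rw [laneDensity, max_eq_right (by linarith), min_eq_left zero_le_one]

theorem laneDensity_of_add_one_le (h : a + 1 ≤ ρ) : laneDensity a ρ = 1 := by
  rw [laneDensity, max_eq_left (by linarith), min_eq_right (by linarith)]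

theorem laneDensity_of_mem_Icc (h : ρ ∈ Icc a (a + 1)) : laneDensity a ρ = ρ - a := by
  rw [laneDensity, max_eq_left (by linarith [h.1]), min_eq_left (by linarith [h.2])]

theorem continuous_laneDensity (a : ℝ) : Continuous (laneDensity a) :=
  ((continuous_id.sub continuous_const).max continuous_const).min continuous_const

theorem laneDensity_mul_one_sub_eq (a ρ : ℝ) :
    laneDensity a ρ * (1 - laneDensity a ρ) =
      (ρ - a) * (a + 1 - ρ) * if a < ρ ∧ ρ < a + 1 then 1 else 0 := by
  rcases le_or_gt ρ a with h | ha
  · rw [laneDensity_of_le h, if_neg fun h' => by linarith [h'.1]]; ring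
  rcases le_or_gt (a + 1) ρ with h | hb
  · rw [laneDensity_of_add_one_le h, if_neg fun h' => by linarith [h'.2]]; ring
  · rw [laneDensity_of_mem_Icc ⟨ha.le, hb.le⟩, if_pos ⟨ha, hb⟩]; ring

theorem laneDensity_mul_one_sub_nonneg (a ρ : ℝ) :
    0 ≤ laneDensity a ρ * (1 - laneDensity a ρ) := by
  rw [laneDensity_mul_one_sub_eq]
  split_ifs with h
  · nlinarith [h.1, h.2]
  · simp

theorem laneDensity_mul_one_sub_pos_iff :
    0 < laneDensity a ρ * (1 - laneDensity a ρ) ↔ ρ ∈ Ioo a (a + 1) := by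
  rw [laneDensity_mul_one_sub_eq]
  split_ifs with h
  · rw [mul_one]
    exact iff_of_true (mul_pos (sub_pos.2 h.1) (by linarith [h.2])) h
  · rw [mul_zero]
    exact iff_of_false (lt_irrefl 0) h

end laneDensity

theorem continuous_totalFlux (n : ℕ) (d : ℕ → ℝ) : Continuous (totalFlux n d) :=
  continuous_finsetSum _ fun i _ =>
    (continuous_const.mul (continuous_laneDensity i)).mul
      (continuous_const.sub (continuous_laneDensity i))

/-- On `[i, i + 1]` every lane below `i` is full and every lane above `i` is empty. -/
theorem totalFlux_eq_of_mem_Icc {n i : ℕ} (d : ℕ → ℝ) (hi : i < n) {ρ : ℝ}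
    (hρ : ρ ∈ Icc (i : ℝ) (i + 1)) :
    totalFlux n d ρ = d i * (ρ - i) * (i + 1 - ρ) := by
  have hother : ∀ j ≠ i, d j * laneDensity j ρ * (1 - laneDensity j ρ) = 0 := by
    intro j hji
    rcases hji.lt_or_gt with hj | hj
    · have : (j : ℝ) + 1 ≤ i := by exact_mod_cast hj
      rw [laneDensity_of_add_one_le (by linarith [hρ.1])]; ring
    · have : (i : ℝ) + 1 ≤ j := by exact_mod_cast hj
      rw [laneDensity_of_le (by linarith [hρ.2])]; ring
  rw [totalFlux, sum_eq_single_of_mem i (mem_range.2 hi) fun j _ hj => hother j hj,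
    laneDensity_of_mem_Icc hρ]
  ring

theorem mem_Ioo_or_eq_nat_of_mem_Icc {n : ℕ} {ρ : ℝ} (hρ : ρ ∈ Icc (0 : ℝ) n) :
    (∃ i < n, ρ ∈ Ioo (i : ℝ) (i + 1)) ∨ ∃ k ≤ n, ρ = k := by
  set k := ⌊ρ⌋₊
  have hkρ : (k : ℝ) ≤ ρ := Nat.floor_le hρ.1
  rcases hkρ.eq_or_lt with heq | hlt
  · exact Or.inr ⟨k, by exact_mod_cast heq ▸ hρ.2, heq.symm⟩
  · have hkn : k < n := by exact_mod_cast hlt.trans_le hρ.2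
    exact Or.inl ⟨k, hkn, hlt, Nat.lt_floor_add_one ρ⟩

theorem nat_notMem_Ioo (i k : ℕ) : (k : ℝ) ∉ Ioo (i : ℝ) (i + 1) := by
  rintro ⟨h₁, h₂⟩
  have h₁ : i < k := by exact_mod_cast h₁
  have h₂ : k < i + 1 := by exact_mod_cast h₂
  omega

theorem totalFlux_eq_zero_iff {n : ℕ} {d : ℕ → ℝ} (hd : ∀ i, 0 < d i) {ρ : ℝ}
    (hρ : ρ ∈ Icc (0 : ℝ) n) :
    totalFlux n d ρ = 0 ↔ ∃ k ≤ n, ρ = k := by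
  have hterm_pos : ∀ i, 0 < d i * laneDensity i ρ * (1 - laneDensity i ρ) ↔
      ρ ∈ Ioo (i : ℝ) (i + 1) := fun i => by
    rw [mul_assoc, mul_pos_iff_of_pos_left (hd i), laneDensity_mul_one_sub_pos_iff]
  have hterm_nonneg : ∀ i ∈ range n, 0 ≤ d i * laneDensity i ρ * (1 - laneDensity i ρ) :=
    fun i _ => by rw [mul_assoc]; exact mul_nonneg (hd i).le (laneDensity_mul_one_sub_nonneg _ _)
  rw [totalFlux, sum_eq_zero_iff_of_nonneg hterm_nonneg]
  constructor
  · intro hzero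
    refine (mem_Ioo_or_eq_nat_of_mem_Icc hρ).resolve_left ?_
    rintro ⟨i, hi, hmem⟩
    exact ((hterm_pos i).2 hmem).ne' (hzero i (mem_range.2 hi))
  · rintro ⟨k, -, rfl⟩ i hi
    refine (hterm_nonneg i hi).eq_of_not_lt' fun hpos => ?_
    exact nat_notMem_Ioo i k ((hterm_pos i).1 hpos)

theorem totalFlux_midpoint {n i : ℕ} (d : ℕ → ℝ) (hi : i < n) :
    totalFlux n d (i + 1 / 2) = d i / 4 := by
  rw [totalFlux_eq_of_mem_Icc d hi ⟨by linarith, by linarith⟩]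
  ring

theorem isLocalMax_totalFlux_midpoint {n i : ℕ} {d : ℕ → ℝ} (hd : 0 ≤ d i) (hi : i < n) :
    IsLocalMax (totalFlux n d) (i + 1 / 2) := by
  have hmem : (i : ℝ) + 1 / 2 ∈ Ioo (i : ℝ) (i + 1) := ⟨by linarith, by linarith⟩
  filter_upwards [isOpen_Ioo.mem_nhds hmem] with ρ hρ
  rw [totalFlux_midpoint d hi, totalFlux_eq_of_mem_Icc d hi (Ioo_subset_Icc_self hρ)]
  nlinarith [mul_nonneg hd (sq_nonneg (ρ - i - 1 / 2))]

end NLaneFlux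

open NLaneFlux in
theorem nlane_totally_asymmetric_flux_general (n : ℕ)
    (d : ℕ → ℝ) (hd : ∀ i, 0 < d i) :
    let ρt : ℕ → ℝ → ℝ := fun i ρ => min (max (ρ - (i : ℝ)) 0) 1
    let G : ℝ → ℝ := fun ρ => ∑ i ∈ Finset.range n, d i * ρt i ρ * (1 - ρt i ρ)
    (∀ ρ : ℝ, G ρ = ∑ i ∈ Finset.range n,
      d i * (ρ - (i : ℝ)) * ((i : ℝ) + 1 - ρ) *
        (if (i : ℝ) < ρ ∧ ρ < (i : ℝ) + 1 then 1 else 0)) ∧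
    Continuous G ∧
    (∀ ρ ∈ Set.Icc (0:ℝ) (n : ℝ), (G ρ = 0 ↔ ∃ k : ℕ, k ≤ n ∧ ρ = (k : ℝ))) ∧
    (∀ i < n, G ((i : ℝ) + 1 / 2) = d i / 4 ∧ IsLocalMax G ((i : ℝ) + 1 / 2)) := by
  intro ρt G
  change (∀ ρ, totalFlux n d ρ = _) ∧ Continuous (totalFlux n d) ∧
    (∀ ρ ∈ Icc (0 : ℝ) n, (totalFlux n d ρ = 0 ↔ _)) ∧
    ∀ i < n, totalFlux n d (i + 1 / 2) = d i / 4 ∧ IsLocalMax (totalFlux n d) (i + 1 / 2)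
  refine ⟨fun ρ => sum_congr rfl fun i _ => ?_, continuous_totalFlux n d,
    fun ρ hρ => totalFlux_eq_zero_iff hd hρ,
    fun i hi => ⟨totalFlux_midpoint d hi, isLocalMax_totalFlux_midpoint (hd i).le hi⟩⟩
  rw [mul_assoc, laneDensity_mul_one_sub_eq]
  ring

theorem nlane_totally_asymmetric_flux (n : ℕ) (hn : 0 < n)
    (d : ℕ → ℝ) (hd : ∀ i, 0 < d i) :
    let ρt : ℕ → ℝ → ℝ := fun i ρ => min (max (ρ - (i : ℝ)) 0) 1
    let G : ℝ → ℝ := fun ρ => ∑ i ∈ Finset.range n, d i * ρt i ρ * (1 - ρt i ρ)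
    (∀ ρ : ℝ, G ρ = ∑ i ∈ Finset.range n,
      d i * (ρ - (i : ℝ)) * ((i : ℝ) + 1 - ρ) *
        (if (i : ℝ) < ρ ∧ ρ < (i : ℝ) + 1 then 1 else 0)) ∧
    Continuous G ∧
    (∀ ρ ∈ Set.Icc (0:ℝ) (n : ℝ), (G ρ = 0 ↔ ∃ k : ℕ, k ≤ n ∧ ρ = (k : ℝ))) ∧
    (∀ i < n, G ((i : ℝ) + 1 / 2) = d i / 4 ∧ IsLocalMax G ((i : ℝ) + 1 / 2)) :=
  nlane_totally_asymmetric_flux_general n d hd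
end

section
/- Let q be an irreducible kernel on {0,…,n-1} with positive reversible measure, F its equilibrium manifold, and for ρ, r ∈ [0,1]^n set F_{ij}(ρ;r) = [1_{ρ_i > r_i} - 1_{ρ_j > r_j}]·[c_{ji}(ρ) - c_{ij}(ρ)] with c_{ij}(ρ) = q(i,j)ρ_i(1-ρ_j). Define F̃(ρ) = ∫₀ⁿ Σ_{i,j} F_{ij}(ρ; ψ^{-1}(k)) dk, where ψ^{-1}(k) ∈ F is the equilibrium state with total density k. Then F̃(ρ) ≤ 0 for all ρ ∈ [0,1]^n, and F̃(ρ) = 0 if and only if ρ ∈ F. -/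
/-!
For an equilibrium `r`, detailed balance on the edge `ij` together with the monotonicity of
`σᵢ (1 - σⱼ)` in each argument shows that `rᵢ < ρᵢ` and `ρⱼ ≤ rⱼ` force `c_ji(ρ) ≤ c_ij(ρ)`;
hence every summand of the integrand is nonpositive. If `ρ ∉ F`, pick an edge `(a, b)` with
`c_ba(ρ) < c_ab(ρ)`. As `k` runs from `0` to `n` the equilibria run from `0` to `1`, so by the
intermediate value theorem some `r = ψ⁻¹(k₀)` has `r_a + r_b = ρ_a + ρ_b`, and then necessarily
`r_a < ρ_a` and `ρ_b < r_b`. By continuity this persists near `k₀`, where the `(a, b)`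
summand is strictly negative, so the integral is strictly negative. Monotonicity of `ψ⁻¹` makes
the indicators monotone in `k`, which gives integrability.
-/

open MeasureTheory Set Filter Topology

theorem intervalIntegral_neg_of_nonpos_of_eventually_neg {f : ℝ → ℝ} {a b x : ℝ} (hab : a < b)
    (hfi : IntervalIntegrable f volume a b) (hf : ∀ y ∈ Ioc a b, f y ≤ 0) (hx : x ∈ Icc a b)
    (hneg : ∀ᶠ y in 𝓝[Icc a b] x, f y < 0) : ∫ y in a..b, f y < 0 := by
  obtain ⟨U, hU, hxU, hUf⟩ := mem_nhdsWithin.1 hneg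
  have hUne : (U ∩ Ioo a b).Nonempty :=
    mem_closure_iff.1 (by rwa [closure_Ioo hab.ne]) U hU hxU
  have hpos : 0 < volume (U ∩ Ioo a b) := (hU.inter isOpen_Ioo).measure_pos volume hUne
  rw [← intervalIntegral.integral_zero (a := a) (b := b) (μ := volume)]
  refine intervalIntegral.integral_lt_integral_of_ae_le_of_measure_setOfPred_lt_ne_zero hab.le hfi
    intervalIntegrable_const ((ae_restrict_iff' measurableSet_Ioc).2 (.of_forall hf)) ?_
  rw [Measure.restrict_apply' measurableSet_Ioc]
  refine (hpos.trans_le (measure_mono ?_)).ne'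
  exact fun y ⟨hyU, hy⟩ ↦ ⟨hUf ⟨hyU, Ioo_subset_Icc_self hy⟩, Ioo_subset_Ioc_self hy⟩

theorem eq_one_of_sum_eq_card {ι : Type*} [Fintype ι] {σ : ι → ℝ} (hσ : ∀ i, σ i ≤ 1)
    (hsum : ∑ i, σ i = Fintype.card ι) : σ = 1 := by
  have hdefect : ∑ i, (1 - σ i) = 0 := by simp [Finset.sum_sub_distrib, hsum]
  funext i
  have hi : 1 - σ i = 0 :=
    congrFun ((Fintype.sum_eq_zero_iff_of_nonneg fun j ↦ sub_nonneg.2 (hσ j)).1 hdefect) i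
  rw [Pi.one_apply]
  linarith

theorem antitoneOn_ite_lt {g : ℝ → ℝ} {s : Set ℝ} (hg : MonotoneOn g s) (c : ℝ) :
    AntitoneOn (fun k ↦ if g k < c then (1 : ℝ) else 0) s := by
  intro x hx y hy hxy
  by_cases hy' : g y < c
  · simp [hy', (hg hx hy hxy).trans_lt hy']
  · simp only [hy', if_false]
    split_ifs <;> norm_num

theorem reverse_flux_le_of_balanced {qij qji ri rj pi pj : ℝ} (hqij : 0 ≤ qij) (hqji : 0 ≤ qji)
    (hbal : ri * (1 - rj) * qij = rj * (1 - ri) * qji)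
    (hrj : rj ∈ Icc (0 : ℝ) 1) (hpi : pi ∈ Icc (0 : ℝ) 1) (hi : ri ≤ pi) (hj : pj ≤ rj) :
    qji * pj * (1 - pi) ≤ qij * pi * (1 - pj) := by
  have hji : pj * (1 - pi) ≤ rj * (1 - ri) :=
    mul_le_mul hj (by linarith) (by linarith [hpi.2]) hrj.1
  have hij : ri * (1 - rj) ≤ pi * (1 - pj) :=
    mul_le_mul hi (by linarith) (by linarith [hrj.2]) hpi.1
  nlinarith [mul_le_mul_of_nonneg_left hji hqji, mul_le_mul_of_nonneg_left hij hqij]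

section Dissipation

variable {ι : Type*} {q : ι → ι → ℝ} {ρ r : ι → ℝ}

def equilibria (q : ι → ι → ℝ) : Set (ι → ℝ) :=
  {σ | (∀ i, σ i ∈ Icc (0 : ℝ) 1) ∧ ∀ i j, σ i * (1 - σ j) * q i j = σ j * (1 - σ i) * q j i}

noncomputable def dissipationIntegrand [Fintype ι] (q : ι → ι → ℝ) (ρ r : ι → ℝ) : ℝ :=
  ∑ i, ∑ j, ((if r i < ρ i then (1 : ℝ) else 0) - (if r j < ρ j then (1 : ℝ) else 0)) *
    (q j i * ρ j * (1 - ρ i) - q i j * ρ i * (1 - ρ j))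

theorem exists_flux_lt_of_notMem_equilibria (hρ : ∀ i, ρ i ∈ Icc (0 : ℝ) 1)
    (hρq : ρ ∉ equilibria q) : ∃ a b, q b a * ρ b * (1 - ρ a) < q a b * ρ a * (1 - ρ b) := by
  simp only [equilibria, mem_ofPred_eq, hρ, implies_true, true_and, not_forall] at hρq
  obtain ⟨a, b, hab⟩ := hρq
  rcases lt_or_gt_of_ne hab with h | h
  · exact ⟨b, a, by linarith⟩
  · exact ⟨a, b, by linarith⟩

theorem dissipation_term_nonpos (hq : ∀ i j, 0 ≤ q i j) (hρ : ∀ i, ρ i ∈ Icc (0 : ℝ) 1)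
    (hr : r ∈ equilibria q) (i j : ι) :
    ((if r i < ρ i then (1 : ℝ) else 0) - (if r j < ρ j then (1 : ℝ) else 0)) *
      (q j i * ρ j * (1 - ρ i) - q i j * ρ i * (1 - ρ j)) ≤ 0 := by
  have hflux (i j : ι) (hi : r i ≤ ρ i) (hj : ρ j ≤ r j) :=
    reverse_flux_le_of_balanced (hq i j) (hq j i) (hr.2 i j) (hr.1 j) (hρ i) hi hj
  split_ifs with hi hj hj
  · simp
  · linarith [hflux i j hi.le (not_lt.1 hj)]
  · linarith [hflux j i hj.le (not_lt.1 hi)]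
  · simp

theorem lt_and_lt_of_add_eq_of_flux_lt (hq : ∀ i j, 0 ≤ q i j) (hρ : ∀ i, ρ i ∈ Icc (0 : ℝ) 1)
    (hr : r ∈ equilibria q) {a b : ι}
    (hab : q b a * ρ b * (1 - ρ a) < q a b * ρ a * (1 - ρ b))
    (hsum : r a + r b = ρ a + ρ b) : r a < ρ a ∧ ρ b < r b := by
  have ha : r a < ρ a := by
    by_contra! h
    linarith [reverse_flux_le_of_balanced (hq b a) (hq a b) (hr.2 b a) (hr.1 a) (hρ b)
      (by linarith) h]
  exact ⟨ha, by linarith⟩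

variable [Fintype ι]

theorem dissipationIntegrand_nonpos (hq : ∀ i j, 0 ≤ q i j) (hρ : ∀ i, ρ i ∈ Icc (0 : ℝ) 1)
    (hr : r ∈ equilibria q) : dissipationIntegrand q ρ r ≤ 0 :=
  Finset.sum_nonpos fun i _ ↦ Finset.sum_nonpos fun j _ ↦ dissipation_term_nonpos hq hρ hr i j

theorem dissipationIntegrand_neg (hq : ∀ i j, 0 ≤ q i j) (hρ : ∀ i, ρ i ∈ Icc (0 : ℝ) 1)
    (hr : r ∈ equilibria q) {a b : ι}
    (hab : q b a * ρ b * (1 - ρ a) < q a b * ρ a * (1 - ρ b))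
    (ha : r a < ρ a) (hb : ρ b < r b) : dissipationIntegrand q ρ r < 0 := by
  have hterm := dissipation_term_nonpos hq hρ hr
  refine Finset.sum_neg' (fun i _ ↦ Finset.sum_nonpos fun j _ ↦ hterm i j)
    ⟨a, Finset.mem_univ a, Finset.sum_neg' (fun j _ ↦ hterm a j) ⟨b, Finset.mem_univ b, ?_⟩⟩
  rw [if_pos ha, if_neg hb.not_gt]
  linarith

theorem dissipationIntegrand_eq_zero_of_mem (hρ : ρ ∈ equilibria q) (r : ι → ℝ) :
    dissipationIntegrand q ρ r = 0 :=
  Finset.sum_eq_zero fun i _ ↦ Finset.sum_eq_zero fun j _ ↦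
    mul_eq_zero_of_right _ (by linear_combination hρ.2 j i)

theorem intervalIntegrable_dissipationIntegrand {ρt : ℝ → ι → ℝ} {a b : ℝ}
    (hmono : ∀ i, MonotoneOn (fun k ↦ ρt k i) (uIcc a b)) :
    IntervalIntegrable (fun k ↦ dissipationIntegrand q ρ (ρt k)) volume a b := by
  have hind i := (antitoneOn_ite_lt (hmono i) (ρ i)).intervalIntegrable (μ := volume)
  have hsum : (fun k ↦ dissipationIntegrand q ρ (ρt k)) = ∑ i, ∑ j, fun k ↦
      ((if ρt k i < ρ i then (1 : ℝ) else 0) - (if ρt k j < ρ j then (1 : ℝ) else 0)) *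
        (q j i * ρ j * (1 - ρ i) - q i j * ρ i * (1 - ρ j)) := by
    funext k
    simp only [dissipationIntegrand, Finset.sum_apply]
  rw [hsum]
  exact IntervalIntegrable.sum _ fun i _ ↦ IntervalIntegrable.sum _ fun j _ ↦
    ((hind i).sub (hind j)).mul_const _

theorem integral_dissipationIntegrand_neg (hq : ∀ i j, 0 ≤ q i j)
    (hρ : ∀ i, ρ i ∈ Icc (0 : ℝ) 1) (hρq : ρ ∉ equilibria q) {ρt : ℝ → ι → ℝ} {L : ℝ}
    (hL : 0 ≤ L) (heq : ∀ k ∈ Icc 0 L, ρt k ∈ equilibria q) (h0 : ρt 0 = 0) (h1 : ρt L = 1)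
    (hcont : ∀ i, ContinuousOn (fun k ↦ ρt k i) (Icc 0 L))
    (hmono : ∀ i, MonotoneOn (fun k ↦ ρt k i) (Icc 0 L)) :
    ∫ k in 0..L, dissipationIntegrand q ρ (ρt k) < 0 := by
  obtain ⟨a, b, hab⟩ := exists_flux_lt_of_notMem_equilibria hρ hρq
  have hL : 0 < L := hL.lt_of_ne <| by
    rintro rfl
    simpa using congrFun (h0.symm.trans h1) a
  obtain ⟨k₀, hk₀, hcross⟩ : ∃ k₀ ∈ Icc 0 L, ρt k₀ a + ρt k₀ b = ρ a + ρ b :=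
    intermediate_value_Icc hL.le ((hcont a).add (hcont b)) <| by
      show ρ a + ρ b ∈ Icc (ρt 0 a + ρt 0 b) (ρt L a + ρt L b)
      simp only [h0, h1, Pi.zero_apply, Pi.one_apply]
      constructor <;> linarith [(hρ a).1, (hρ a).2, (hρ b).1, (hρ b).2]
  obtain ⟨ha, hb⟩ := lt_and_lt_of_add_eq_of_flux_lt hq hρ (heq k₀ hk₀) hab hcross
  refine intervalIntegral_neg_of_nonpos_of_eventually_neg hL
    (intervalIntegrable_dissipationIntegrand (by rwa [uIcc_of_le hL.le]))
    (fun k hk ↦ dissipationIntegrand_nonpos hq hρ (heq k (Ioc_subset_Icc_self hk))) hk₀ ?_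
  filter_upwards [((hcont a).continuousWithinAt hk₀).eventually_lt continuousWithinAt_const ha,
    continuousWithinAt_const.eventually_lt ((hcont b).continuousWithinAt hk₀) hb,
    self_mem_nhdsWithin] with k hka hkb hk
  exact dissipationIntegrand_neg hq hρ (heq k hk) hab hka hkb

end Dissipation

theorem entropy_dissipation_functional_general (n : ℕ)
    (q : Fin n → Fin n → ℝ) (hq : ∀ i j, 0 ≤ q i j)
    (Feq : Set (Fin n → ℝ))
    (hFeq : Feq = {σ | (∀ i, σ i ∈ Set.Icc (0:ℝ) 1) ∧
      ∀ i j, σ i * (1 - σ j) * q i j = σ j * (1 - σ i) * q j i})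
    (ρt : ℝ → Fin n → ℝ)
    (hρt1 : ∀ k ∈ Set.Icc (0:ℝ) (n : ℝ), ρt k ∈ Feq ∧ ∑ i, ρt k i = k)
    (hρt2 : ∀ i : Fin n, ContinuousOn (fun k => ρt k i) (Set.Icc 0 (n : ℝ)) ∧
      MonotoneOn (fun k => ρt k i) (Set.Icc 0 (n : ℝ)))
    (ρ : Fin n → ℝ) (hρ : ∀ i, ρ i ∈ Set.Icc (0:ℝ) 1) :
    let c : Fin n → Fin n → (Fin n → ℝ) → ℝ := fun i j σ => q i j * σ i * (1 - σ j)
    let Ft : ℝ := ∫ k in (0:ℝ)..(n : ℝ), ∑ i, ∑ j,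
      (((if ρt k i < ρ i then (1:ℝ) else 0) - (if ρt k j < ρ j then (1:ℝ) else 0)) *
        (c j i ρ - c i j ρ))
    Ft ≤ 0 ∧ (Ft = 0 ↔ ρ ∈ Feq) := by
  intro c Ft
  subst hFeq
  change (∫ k in (0 : ℝ)..n, dissipationIntegrand q ρ (ρt k)) ≤ 0 ∧
    ((∫ k in (0 : ℝ)..n, dissipationIntegrand q ρ (ρt k)) = 0 ↔ ρ ∈ equilibria q)
  have hn : (0 : ℝ) ≤ n := n.cast_nonneg
  have heq k hk : ρt k ∈ equilibria q := (hρt1 k hk).1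
  have h0 : ρt 0 = 0 := (Fintype.sum_eq_zero_iff_of_nonneg fun i ↦ ((heq 0 ⟨le_rfl, hn⟩).1 i).1).1
    (hρt1 0 ⟨le_rfl, hn⟩).2
  have h1 : ρt n = 1 := eq_one_of_sum_eq_card (fun i ↦ ((heq n ⟨hn, le_rfl⟩).1 i).2)
    ((hρt1 n ⟨hn, le_rfl⟩).2.trans (by simp))
  refine ⟨?_, fun hFt ↦ by_contra fun hρq ↦ ?_, fun hρq ↦ ?_⟩
  · rw [intervalIntegral.integral_of_le hn]
    exact setIntegral_nonpos measurableSet_Ioc fun k hk ↦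
      dissipationIntegrand_nonpos hq hρ (heq k (Ioc_subset_Icc_self hk))
  · exact (integral_dissipationIntegrand_neg hq hρ hρq hn heq h0 h1 (fun i ↦ (hρt2 i).1)
      (fun i ↦ (hρt2 i).2)).ne hFt
  · simp [dissipationIntegrand_eq_zero_of_mem hρq]

theorem entropy_dissipation_functional (n : ℕ) (hn : 0 < n)
    (q : Fin n → Fin n → ℝ) (hq : ∀ i j, 0 ≤ q i j)
    (hirr : ∀ i j : Fin n, Relation.ReflTransGen (fun a b => 0 < q a b) i j)
    (lam : Fin n → ℝ) (hlam : ∀ i, 0 < lam i)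
    (hrev : ∀ i j, lam i * q i j = lam j * q j i)
    (Feq : Set (Fin n → ℝ))
    (hFeq : Feq = {σ | (∀ i, σ i ∈ Set.Icc (0:ℝ) 1) ∧
      ∀ i j, σ i * (1 - σ j) * q i j = σ j * (1 - σ i) * q j i})
    (ρt : ℝ → Fin n → ℝ)
    (hρt1 : ∀ k ∈ Set.Icc (0:ℝ) (n : ℝ), ρt k ∈ Feq ∧ ∑ i, ρt k i = k)
    (hρt2 : ∀ i : Fin n, ContinuousOn (fun k => ρt k i) (Set.Icc 0 (n : ℝ)) ∧
      MonotoneOn (fun k => ρt k i) (Set.Icc 0 (n : ℝ)))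
    (ρ : Fin n → ℝ) (hρ : ∀ i, ρ i ∈ Set.Icc (0:ℝ) 1) :
    let c : Fin n → Fin n → (Fin n → ℝ) → ℝ := fun i j σ => q i j * σ i * (1 - σ j)
    let Ft : ℝ := ∫ k in (0:ℝ)..(n : ℝ), ∑ i, ∑ j,
      (((if ρt k i < ρ i then (1:ℝ) else 0) - (if ρt k j < ρ j then (1:ℝ) else 0)) *
        (c j i ρ - c i j ρ))
    Ft ≤ 0 ∧ (Ft = 0 ↔ ρ ∈ Feq) :=
  entropy_dissipation_functional_general n q hq Feq hFeq ρt hρt1 hρt2 ρ hρ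
end
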